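/- arXiv:1906.10530 — 7 statements merged into one kernel-verified Lean document; each statement's English description precedes it below -/
import Mathlib

section
/- For a Laplacian L partitioned by F and T with L_FF invertible, for any vector b in the range of L, the sum of the squared energy of routing the restriction b_F within the block L_FF and the squared energy of routing the projected demand P·b in the Schur complement SC(G,T) equals the squared energy of routing b in G; i.e., (b_F)^T · L_FF^{-1} · b_F + (P·b)^T · SC(G,T)^† · (P·b) = b^T · L^† · b, where P = [−L_TF·L_FF^{-1}, I_T] and † denotes Moore–Penrose pseudoinverse. -/
/-!
Write `L = [[A, B], [Bᵀ, D]]` with `A` invertible and `S = D - Bᵀ A⁻¹ B`, and route `b = L y`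
with `y = (u, v)`. Block elimination gives `yᵀ L y = b_Fᵀ A⁻¹ b_F + vᵀ S v`, and the projection
`P = [-Bᵀ A⁻¹, I]` satisfies `P L = [0, S]`, so `P b = S v`. For a symmetric `M` and any `G` with
`M G M = M`, the form `(M x)ᵀ G (M x)` equals `xᵀ M x`; applied to `L` and to `S` this turns both
pseudoinverse energies into the two quadratic forms above.
-/

open Matrix BigOperators

/-- The Laplacian matrix of a weighted graph given by a weight function `w`. -/
def lap {V : Type*} [Fintype V] [DecidableEq V] (w : V → V → ℝ) : Matrix V V ℝ :=
  Matrix.diagonal (fun i => ∑ k, w i k) - Matrix.of w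

/-- `B` is the Moore–Penrose pseudoinverse of `A`. -/
def IsMoorePenrose {n : Type*} [Fintype n] (A B : Matrix n n ℝ) : Prop :=
  A * B * A = A ∧ B * A * B = B ∧ (A * B)ᵀ = A * B ∧ (B * A)ᵀ = B * A

namespace Matrix

variable {m n R : Type*} [CommRing R]

theorem mulVec_dotProduct {k l : Type*} [Fintype k] [Fintype l] (M : Matrix k l R) (x : l → R)
    (y : k → R) :
    (M *ᵥ x) ⬝ᵥ y = x ⬝ᵥ (Mᵀ *ᵥ y) := by
  rw [dotProduct_mulVec, vecMul_transpose]

theorem IsSymm.dotProduct_mulVec_of_mul_mul_self [Fintype n] {M G : Matrix n n R}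
    (hM : M.IsSymm) (hG : M * G * M = M) (x : n → R) :
    (M *ᵥ x) ⬝ᵥ (G *ᵥ (M *ᵥ x)) = x ⬝ᵥ (M *ᵥ x) := by
  rw [mulVec_dotProduct, hM.eq, mulVec_mulVec, mulVec_mulVec, hG]

variable [Fintype m] [DecidableEq m]

noncomputable def schurComplement (L : Matrix (m ⊕ n) (m ⊕ n) R) : Matrix n n R :=
  L.toBlocks₂₂ - L.toBlocks₂₁ * L.toBlocks₁₁⁻¹ * L.toBlocks₁₂

theorem IsSymm.schurComplement {L : Matrix (m ⊕ n) (m ⊕ n) R} (hL : L.IsSymm) :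
    L.schurComplement.IsSymm := by
  obtain ⟨hA, hBC, -, hD⟩ := isSymm_fromBlocks_iff.mp ((fromBlocks_toBlocks L).symm ▸ hL)
  rw [Matrix.schurComplement, IsSymm, transpose_sub, transpose_mul, transpose_mul,
    transpose_nonsing_inv, hA.eq, hD.eq, ← hBC, transpose_transpose, Matrix.mul_assoc]

variable [Fintype n]

theorem dotProduct_fromBlocks_mulVec_eq_add_schur {A : Matrix m m R} (B : Matrix m n R)
    (D : Matrix n n R) (hA : A.IsSymm) (hA_det : IsUnit A.det) (u : m → R) (v : n → R) :
    (u ⊕ᵥ v) ⬝ᵥ (fromBlocks A B Bᵀ D *ᵥ (u ⊕ᵥ v)) =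
      (A *ᵥ u + B *ᵥ v) ⬝ᵥ (A⁻¹ *ᵥ (A *ᵥ u + B *ᵥ v)) + v ⬝ᵥ ((D - Bᵀ * A⁻¹ * B) *ᵥ v) := by
  have hsolve : A⁻¹ *ᵥ (A *ᵥ u + B *ᵥ v) = u + (A⁻¹ * B) *ᵥ v := by
    rw [mulVec_add, mulVec_mulVec, nonsing_inv_mul A hA_det, one_mulVec, mulVec_mulVec]
  rw [hsolve]
  simp only [fromBlocks_mulVec, Sum.elim_comp_inl, Sum.elim_comp_inr, sumElim_dotProduct_sumElim,
    dotProduct_add, add_dotProduct, sub_mulVec, dotProduct_sub, mulVec_dotProduct, hA.eq,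
    mulVec_mulVec, ← Matrix.mul_assoc, mul_nonsing_inv A hA_det, Matrix.one_mul]
  ring

theorem IsSymm.dotProduct_mulVec_eq_add_schurComplement {L : Matrix (m ⊕ n) (m ⊕ n) R}
    (hL : L.IsSymm) (hA : IsUnit L.toBlocks₁₁.det) (y : m ⊕ n → R) :
    y ⬝ᵥ (L *ᵥ y) = ((L *ᵥ y) ∘ Sum.inl) ⬝ᵥ (L.toBlocks₁₁⁻¹ *ᵥ ((L *ᵥ y) ∘ Sum.inl)) +
      (y ∘ Sum.inr) ⬝ᵥ (L.schurComplement *ᵥ (y ∘ Sum.inr)) := by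
  obtain ⟨A, B, C, D, rfl⟩ : ∃ A B C D, L = Matrix.fromBlocks A B C D :=
    ⟨_, _, _, _, (fromBlocks_toBlocks L).symm⟩
  obtain ⟨hA_symm, rfl, -, -⟩ := isSymm_fromBlocks_iff.mp hL
  simp only [Matrix.schurComplement, toBlocks_fromBlocks₁₁, toBlocks_fromBlocks₁₂,
    toBlocks_fromBlocks₂₁, toBlocks_fromBlocks₂₂] at hA ⊢
  have hblock : (Matrix.fromBlocks A B Bᵀ D *ᵥ y) ∘ Sum.inl =
      A *ᵥ (y ∘ Sum.inl) + B *ᵥ (y ∘ Sum.inr) := by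
    rw [fromBlocks_mulVec, Sum.elim_comp_inl]
  rw [hblock, ← dotProduct_fromBlocks_mulVec_eq_add_schur B D hA_symm hA, Sum.elim_comp_inl_inr]

variable [DecidableEq n]

noncomputable def schurProjection (L : Matrix (m ⊕ n) (m ⊕ n) R) : Matrix n (m ⊕ n) R :=
  fromCols (-(L.toBlocks₂₁ * L.toBlocks₁₁⁻¹)) 1

theorem schurProjection_mul {L : Matrix (m ⊕ n) (m ⊕ n) R} (hA : IsUnit L.toBlocks₁₁.det) :
    L.schurProjection * L = fromCols 0 L.schurComplement := by
  obtain ⟨A, B, C, D, rfl⟩ : ∃ A B C D, L = fromBlocks A B C D :=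
    ⟨_, _, _, _, (fromBlocks_toBlocks L).symm⟩
  simp only [toBlocks_fromBlocks₁₁] at hA
  simp only [schurProjection, schurComplement, toBlocks_fromBlocks₁₁, toBlocks_fromBlocks₁₂,
    toBlocks_fromBlocks₂₁, toBlocks_fromBlocks₂₂, fromCols_mul_fromBlocks, Matrix.neg_mul,
    Matrix.one_mul, Matrix.mul_assoc, nonsing_inv_mul A hA, Matrix.mul_one, neg_add_cancel]
  rw [neg_add_eq_sub]

theorem IsSymm.energy_eq_add_schurComplement_energy {L : Matrix (m ⊕ n) (m ⊕ n) R}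
    (hL : L.IsSymm) (hA : IsUnit L.toBlocks₁₁.det) {G : Matrix (m ⊕ n) (m ⊕ n) R}
    (hG : L * G * L = L) {H : Matrix n n R}
    (hH : L.schurComplement * H * L.schurComplement = L.schurComplement) {b : m ⊕ n → R}
    (hb : ∃ y, L *ᵥ y = b) :
    (b ∘ Sum.inl) ⬝ᵥ (L.toBlocks₁₁⁻¹ *ᵥ (b ∘ Sum.inl)) +
      (L.schurProjection *ᵥ b) ⬝ᵥ (H *ᵥ (L.schurProjection *ᵥ b)) = b ⬝ᵥ (G *ᵥ b) := by
  obtain ⟨y, rfl⟩ := hb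
  have hproj : L.schurProjection *ᵥ (L *ᵥ y) = L.schurComplement *ᵥ (y ∘ Sum.inr) := by
    rw [mulVec_mulVec, schurProjection_mul hA, fromCols_mulVec, zero_mulVec, zero_add]
  rw [hproj, hL.schurComplement.dotProduct_mulVec_of_mul_mul_self hH,
    hL.dotProduct_mulVec_of_mul_mul_self hG, hL.dotProduct_mulVec_eq_add_schurComplement hA]

end Matrix

theorem isSymm_lap {V : Type*} [Fintype V] [DecidableEq V] {w : V → V → ℝ}
    (hsymm : ∀ a b, w a b = w b a) : (lap w).IsSymm :=
  (isSymm_diagonal _).sub (IsSymm.ext fun i j => hsymm j i)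

theorem energy_decomposition_general
    {F T : Type*} [Fintype F] [Fintype T] [DecidableEq F] [DecidableEq T]
    (w : F ⊕ T → F ⊕ T → ℝ)
    (hsymm : ∀ a b, w a b = w b a)
    (hFF : IsUnit ((lap w).toBlocks₁₁).det)
    (Ldag : Matrix (F ⊕ T) (F ⊕ T) ℝ) (hLdag : IsMoorePenrose (lap w) Ldag)
    (SCdag : Matrix T T ℝ)
    (hSCdag : IsMoorePenrose
      ((lap w).toBlocks₂₂ -
        (lap w).toBlocks₂₁ * ((lap w).toBlocks₁₁)⁻¹ * (lap w).toBlocks₁₂) SCdag)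
    (b : F ⊕ T → ℝ) (hb : ∃ y, (lap w) *ᵥ y = b) :
    (b ∘ Sum.inl) ⬝ᵥ (((lap w).toBlocks₁₁)⁻¹ *ᵥ (b ∘ Sum.inl))
      + ((Matrix.fromCols (-((lap w).toBlocks₂₁ * ((lap w).toBlocks₁₁)⁻¹)) 1) *ᵥ b)
          ⬝ᵥ (SCdag *ᵥ
            ((Matrix.fromCols (-((lap w).toBlocks₂₁ * ((lap w).toBlocks₁₁)⁻¹)) 1) *ᵥ b))
      = b ⬝ᵥ (Ldag *ᵥ b) :=
  (isSymm_lap hsymm).energy_eq_add_schurComplement_energy hFF hLdag.1 hSCdag.1 hb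

/-- energy decomposition — the energy of routing `b` equals the energy
of routing `b_F` in the `FF` block plus the energy of routing `P·b` in the Schur
complement. -/
theorem energy_decomposition
    {F T : Type*} [Fintype F] [Fintype T] [DecidableEq F] [DecidableEq T]
    [Nonempty T]
    (w : F ⊕ T → F ⊕ T → ℝ)
    (hsymm : ∀ a b, w a b = w b a) (hnonneg : ∀ a b, 0 ≤ w a b)
    (hconn : ∀ x : F ⊕ T → ℝ, (lap w) *ᵥ x = 0 → ∃ c, ∀ v, x v = c)
    (hFF : IsUnit ((lap w).toBlocks₁₁).det)
    (Ldag : Matrix (F ⊕ T) (F ⊕ T) ℝ) (hLdag : IsMoorePenrose (lap w) Ldag)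
    (SCdag : Matrix T T ℝ)
    (hSCdag : IsMoorePenrose
      ((lap w).toBlocks₂₂ -
        (lap w).toBlocks₂₁ * ((lap w).toBlocks₁₁)⁻¹ * (lap w).toBlocks₁₂) SCdag)
    (b : F ⊕ T → ℝ) (hb : ∃ y, (lap w) *ᵥ y = b) :
    (b ∘ Sum.inl) ⬝ᵥ (((lap w).toBlocks₁₁)⁻¹ *ᵥ (b ∘ Sum.inl))
      + ((Matrix.fromCols (-((lap w).toBlocks₂₁ * ((lap w).toBlocks₁₁)⁻¹)) 1) *ᵥ b)
          ⬝ᵥ (SCdag *ᵥ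
            ((Matrix.fromCols (-((lap w).toBlocks₂₁ * ((lap w).toBlocks₁₁)⁻¹)) 1) *ᵥ b))
      = b ⬝ᵥ (Ldag *ᵥ b) :=
  energy_decomposition_general w hsymm hFF Ldag hLdag SCdag hSCdag b hb
end

section
/- Let L be a Laplacian partitioned by F and T with L_FF invertible, and P = [−L_TF·L_FF^{-1}, I_T]. Then the pseudoinverse factorizes as L^† = [[I_F, −L_FF^{-1}·L_FT],[0, I_T]] · [[L_FF^{-1}, 0],[0, SC(G,T)^†]] · [[I_F, 0],[−L_TF·L_FF^{-1}, I_T]] when restricted to vectors in the image of L, i.e., for all b in range(L), b^T L^† b equals b^T times the right-hand side times b. -/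
open Matrix BigOperators

/-- pseudoinverse factorization of the Laplacian through the Schur
complement, as an identity of quadratic forms on the range of `L`. -/
theorem pseudoinverse_factorization
    {F T : Type*} [Fintype F] [Fintype T] [DecidableEq F] [DecidableEq T]
    [Nonempty T]
    (w : F ⊕ T → F ⊕ T → ℝ)
    (hsymm : ∀ a b, w a b = w b a) (hnonneg : ∀ a b, 0 ≤ w a b)
    (hconn : ∀ x : F ⊕ T → ℝ, (lap w) *ᵥ x = 0 → ∃ c, ∀ v, x v = c)
    (hFF : IsUnit ((lap w).toBlocks₁₁).det)
    (Ldag : Matrix (F ⊕ T) (F ⊕ T) ℝ) (hLdag : IsMoorePenrose (lap w) Ldag)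
    (SCdag : Matrix T T ℝ)
    (hSCdag : IsMoorePenrose
      ((lap w).toBlocks₂₂ -
        (lap w).toBlocks₂₁ * ((lap w).toBlocks₁₁)⁻¹ * (lap w).toBlocks₁₂) SCdag) :
    ∀ b : F ⊕ T → ℝ, (∃ y, (lap w) *ᵥ y = b) →
      b ⬝ᵥ (Ldag *ᵥ b)
        = b ⬝ᵥ
          ((Matrix.fromBlocks 1 (-(((lap w).toBlocks₁₁)⁻¹ * (lap w).toBlocks₁₂)) 0 1
            * Matrix.fromBlocks (((lap w).toBlocks₁₁)⁻¹) 0 0 SCdag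
            * Matrix.fromBlocks 1 0 (-((lap w).toBlocks₂₁ * ((lap w).toBlocks₁₁)⁻¹)) 1)
            *ᵥ b) := by
  rintro b ⟨y, rfl⟩
  set L := lap w with hLdef
  set A := L.toBlocks₁₁ with hA
  set B := L.toBlocks₁₂ with hB
  set C := L.toBlocks₂₁ with hC
  set D := L.toBlocks₂₂ with hD
  haveI : Invertible A := A.invertibleOfIsUnitDet hFF
  have hinv : ⅟A = A⁻¹ := invOf_eq_nonsing_inv A
  have hLsym : Lᵀ = L := by
    ext i j
    by_cases h : i = j
    · subst h; simp [hLdef, lap]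
    · simp [hLdef, lap, Matrix.diagonal_apply, h, Ne.symm h, hsymm i j]
  -- LDU factorization
  set X : Matrix (F ⊕ T) (F ⊕ T) ℝ := Matrix.fromBlocks 1 0 (C * A⁻¹) 1 with hX
  set E : Matrix (F ⊕ T) (F ⊕ T) ℝ := Matrix.fromBlocks A 0 0 (D - C * A⁻¹ * B) with hE
  set Y : Matrix (F ⊕ T) (F ⊕ T) ℝ := Matrix.fromBlocks 1 (A⁻¹ * B) 0 1 with hY
  set Y' : Matrix (F ⊕ T) (F ⊕ T) ℝ := Matrix.fromBlocks 1 (-(A⁻¹ * B)) 0 1 with hY'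
  set E' : Matrix (F ⊕ T) (F ⊕ T) ℝ := Matrix.fromBlocks A⁻¹ 0 0 SCdag with hE'
  set X' : Matrix (F ⊕ T) (F ⊕ T) ℝ := Matrix.fromBlocks 1 0 (-(C * A⁻¹)) 1 with hX'
  have hfact : L = X * E * Y := by
    have h := Matrix.fromBlocks_eq_of_invertible₁₁ A B C D
    rw [hinv] at h
    rw [hA, hB, hC, hD, Matrix.fromBlocks_toBlocks] at h
    exact h
  have hYY : Y * Y' = 1 := by
    rw [hY, hY']
    simp [Matrix.fromBlocks_multiply, Matrix.fromBlocks_one]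
  have hXX : X' * X = 1 := by
    rw [hX, hX']
    simp [Matrix.fromBlocks_multiply, Matrix.fromBlocks_one]
  have hEEE : E * E' * E = E := by
    rw [hE, hE']
    simp only [Matrix.fromBlocks_multiply, Matrix.mul_zero, Matrix.zero_mul,
      Matrix.mul_one, Matrix.one_mul, add_zero, zero_add]
    rw [Matrix.mul_nonsing_inv A hFF, Matrix.one_mul]
    rw [hSCdag.1]
  have key : L * (Y' * E' * X') * L = L := by
    rw [hfact]
    calc X * E * Y * (Y' * E' * X') * (X * E * Y)
        = X * E * (Y * Y') * E' * (X' * X) * E * Y := by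
          simp only [Matrix.mul_assoc]
      _ = X * (E * E' * E) * Y := by
          rw [hYY, hXX]
          simp only [Matrix.mul_one, Matrix.one_mul, Matrix.mul_assoc]
      _ = X * E * Y := by rw [hEEE, Matrix.mul_assoc]
  have hb : ∀ N : Matrix (F ⊕ T) (F ⊕ T) ℝ,
      (L *ᵥ y) ⬝ᵥ (N *ᵥ (L *ᵥ y)) = y ⬝ᵥ ((L * N * L) *ᵥ y) := by
    intro N
    have h1 : L *ᵥ y = y ᵥ* L := by rw [← Matrix.mulVec_transpose, hLsym]
    rw [Matrix.mulVec_mulVec, h1, ← Matrix.dotProduct_mulVec, Matrix.mulVec_mulVec,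
      ← Matrix.mul_assoc]
  rw [hb Ldag, hb (Y' * E' * X'), hLdag.1, key]
end

section
/- For any vertex u in a non-terminal set F of a connected weighted graph, the minimum energy needed to route one unit of flow from u to the terminal set T according to the hitting-probability distribution {(P·1_u)(v)}_{v∈T} equals (1_u − P·1_u)^T · L^† · (1_u − P·1_u), where P is the projection matrix [−L_TF·L_FF^{-1}, I_T] extended by zeros to an n-dimensional vector. -/
open Matrix BigOperators

/-!
Thomson's principle. If `d = L φ`, the potential flow `w a b (φ a - φ b)` routes `d` with energy
`φᵀ L φ`, and any other flow routing `d` differs from it by a circulation, which is orthogonal to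
potential differences; so its energy exceeds `φᵀ L φ` by the (nonnegative) energy of the
circulation. For `d` of total sum zero, connectivity gives `L (L† d) = d`, whence the minimum
energy `dᵀ L† d`. The demand `1_u − P 1_u` has total sum zero because every column of
`L_TF L_FF⁻¹` sums to `-1`, as the columns of `L` sum to zero.
-/

theorem IsMoorePenrose.mul_mul_pinv {n : Type*} [Fintype n] {A B : Matrix n n ℝ}
    (h : IsMoorePenrose A B) (hA : Aᵀ = A) : A * (A * B) = A := by
  calc A * (A * B) = Aᵀ * (A * B)ᵀ := by rw [hA, h.2.2.1]
    _ = (A * B * A)ᵀ := (transpose_mul _ _).symm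
    _ = A := by rw [h.1, hA]

section Laplacian

variable {V : Type*} [Fintype V] [DecidableEq V] {w : V → V → ℝ}

theorem lap_apply (w : V → V → ℝ) (i j : V) :
    lap w i j = (if i = j then ∑ k, w i k else 0) - w i j := by
  simp [lap, diagonal_apply]

theorem lap_transpose (hsymm : ∀ a b, w a b = w b a) : (lap w)ᵀ = lap w := by
  ext i j
  rcases eq_or_ne i j with rfl | h
  · rfl
  · simp [lap_apply, h, h.symm, hsymm i j]

theorem sum_lap_apply_left (hsymm : ∀ a b, w a b = w b a) (j : V) : ∑ i, lap w i j = 0 := by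
  calc ∑ i, lap w i j = ∑ i, lap w j i :=
        Finset.sum_congr rfl fun i _ => congrFun₂ (lap_transpose hsymm) j i
    _ = 0 := by simp [lap_apply, Finset.sum_sub_distrib]

theorem lap_mulVec_apply (w : V → V → ℝ) (φ : V → ℝ) (a : V) :
    (lap w *ᵥ φ) a = ∑ b, w a b * (φ a - φ b) := by
  simp only [mulVec, dotProduct, lap_apply, sub_mul, ite_mul, zero_mul, Finset.sum_sub_distrib,
    Finset.sum_ite_eq, Finset.mem_univ, if_true, mul_sub, Finset.sum_mul]

theorem sum_lap_mulVec (hsymm : ∀ a b, w a b = w b a) (φ : V → ℝ) : ∑ a, (lap w *ᵥ φ) a = 0 := by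
  simp only [mulVec, dotProduct]
  rw [Finset.sum_comm]
  simp [← Finset.sum_mul, sum_lap_apply_left hsymm]

theorem lap_mulVec_pinv_mulVec (hsymm : ∀ a b, w a b = w b a)
    (hconn : ∀ x : V → ℝ, lap w *ᵥ x = 0 → ∃ c, ∀ v, x v = c)
    {Ldag : Matrix V V ℝ} (hLdag : IsMoorePenrose (lap w) Ldag)
    {d : V → ℝ} (hd : ∑ v, d v = 0) : lap w *ᵥ (Ldag *ᵥ d) = d := by
  have hker : lap w *ᵥ (lap w *ᵥ (Ldag *ᵥ d) - d) = 0 := by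
    rw [mulVec_sub, mulVec_mulVec, mulVec_mulVec, Matrix.mul_assoc,
      hLdag.mul_mul_pinv (lap_transpose hsymm), sub_self]
  obtain ⟨c, hc⟩ := hconn _ hker
  have hsum : ∑ v, (lap w *ᵥ (Ldag *ᵥ d) - d) v = 0 := by
    simp only [Pi.sub_apply, Finset.sum_sub_distrib, sum_lap_mulVec hsymm, hd, sub_zero]
  funext v
  have hc0 : c = 0 := by
    have : Nonempty V := ⟨v⟩
    simp only [hc, Finset.sum_const, nsmul_eq_mul] at hsum
    exact (mul_eq_zero.mp hsum).resolve_left (by exact_mod_cast Fintype.card_ne_zero)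
  simpa [hc0, sub_eq_zero] using hc v

end Laplacian

section Flows

variable {V : Type*} {w : V → V → ℝ}

def potentialFlow (w : V → V → ℝ) (φ : V → ℝ) (a b : V) : ℝ := w a b * (φ a - φ b)

theorem potentialFlow_antisymm (hsymm : ∀ a b, w a b = w b a) (φ : V → ℝ) (a b : V) :
    potentialFlow w φ a b = - potentialFlow w φ b a := by
  simp only [potentialFlow, hsymm a b]
  ring

variable [Fintype V]

noncomputable def energy (w f : V → V → ℝ) : ℝ :=
  (1/2) * ∑ a, ∑ b, (if w a b = 0 then 0 else (f a b)^2 / w a b)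

def flowEnergies (w : V → V → ℝ) (d : V → ℝ) : Set ℝ :=
  {En : ℝ | ∃ f : V → V → ℝ,
    (∀ a b, f a b = - f b a) ∧
    (∀ a b, w a b = 0 → f a b = 0) ∧
    (∀ a, ∑ b, f a b = d a) ∧
    En = energy w f}

theorem energy_nonneg (hnonneg : ∀ a b, 0 ≤ w a b) (f : V → V → ℝ) : 0 ≤ energy w f := by
  refine mul_nonneg (by norm_num) (Finset.sum_nonneg fun a _ => Finset.sum_nonneg fun b _ => ?_)
  split_ifs
  exacts [le_rfl, div_nonneg (sq_nonneg _) (hnonneg a b)]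

theorem sum_sum_sub_mul_of_antisymm {g : V → V → ℝ} (hg : ∀ a b, g a b = - g b a) (φ : V → ℝ) :
    ∑ a, ∑ b, (φ a - φ b) * g a b = 2 * ∑ a, φ a * ∑ b, g a b := by
  have hswap : ∑ a, ∑ b, φ b * g a b = - ∑ a, ∑ b, φ a * g a b := by
    rw [Finset.sum_comm]
    simp only [← Finset.sum_neg_distrib]
    refine Finset.sum_congr rfl fun a _ => Finset.sum_congr rfl fun b _ => ?_
    rw [hg b a, mul_neg]
  have hmul : ∑ a, φ a * ∑ b, g a b = ∑ a, ∑ b, φ a * g a b := by simp only [Finset.mul_sum]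
  rw [hmul]
  simp only [sub_mul, Finset.sum_sub_distrib, hswap]
  ring

theorem energy_potentialFlow [DecidableEq V] (hsymm : ∀ a b, w a b = w b a) (φ : V → ℝ) :
    energy w (potentialFlow w φ) = φ ⬝ᵥ (lap w *ᵥ φ) := by
  have hterm : ∀ a b, (if w a b = 0 then 0 else (potentialFlow w φ a b)^2 / w a b)
      = (φ a - φ b) * potentialFlow w φ a b := by
    intro a b
    split_ifs with h
    · simp [potentialFlow, h]
    · simp only [potentialFlow]
      field_simp
  unfold energy
  simp only [hterm]
  rw [sum_sum_sub_mul_of_antisymm (potentialFlow_antisymm hsymm φ)]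
  simp only [dotProduct, lap_mulVec_apply, potentialFlow]
  ring

theorem energy_eq_energy_potentialFlow_add {f : V → V → ℝ} (hf : ∀ a b, w a b = 0 → f a b = 0)
    (φ : V → ℝ) :
    energy w f = energy w (potentialFlow w φ)
      + ∑ a, ∑ b, (φ a - φ b) * (f a b - potentialFlow w φ a b)
      + energy w (f - potentialFlow w φ) := by
  have hterm : ∀ a b, (if w a b = 0 then 0 else (f a b)^2 / w a b)
      = (if w a b = 0 then 0 else (potentialFlow w φ a b)^2 / w a b)
        + 2 * ((φ a - φ b) * (f a b - potentialFlow w φ a b))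
        + (if w a b = 0 then 0 else ((f - potentialFlow w φ) a b)^2 / w a b) := by
    intro a b
    split_ifs with h
    · simp [hf a b h, potentialFlow, h]
    · simp only [potentialFlow, Pi.sub_apply]
      field_simp
      ring
  unfold energy
  simp only [hterm, Finset.sum_add_distrib, ← Finset.mul_sum]
  ring

theorem isLeast_flowEnergies [DecidableEq V] (hsymm : ∀ a b, w a b = w b a)
    (hnonneg : ∀ a b, 0 ≤ w a b) (φ : V → ℝ) :
    IsLeast (flowEnergies w (lap w *ᵥ φ)) (φ ⬝ᵥ (lap w *ᵥ φ)) := by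
  have hdiv : ∀ a, ∑ b, potentialFlow w φ a b = (lap w *ᵥ φ) a := fun a =>
    (lap_mulVec_apply w φ a).symm
  refine ⟨⟨potentialFlow w φ, potentialFlow_antisymm hsymm φ, fun a b h => by
    simp [potentialFlow, h], hdiv, (energy_potentialFlow hsymm φ).symm⟩, ?_⟩
  rintro _ ⟨f, hf_antisymm, hf_supp, hf_div, rfl⟩
  have hcross : ∑ a, ∑ b, (φ a - φ b) * (f a b - potentialFlow w φ a b) = 0 := by
    rw [sum_sum_sub_mul_of_antisymm (fun a b => by
      rw [hf_antisymm a b, potentialFlow_antisymm hsymm φ a b]; ring)]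
    simp [Finset.sum_sub_distrib, hf_div, hdiv]
  rw [energy_eq_energy_potentialFlow_add hf_supp φ, hcross, energy_potentialFlow hsymm φ]
  linarith [energy_nonneg hnonneg (f - potentialFlow w φ)]

end Flows

theorem sInf_flowEnergies_eq_pinv {V : Type*} [Fintype V] [DecidableEq V] {w : V → V → ℝ}
    (hsymm : ∀ a b, w a b = w b a) (hnonneg : ∀ a b, 0 ≤ w a b)
    (hconn : ∀ x : V → ℝ, lap w *ᵥ x = 0 → ∃ c, ∀ v, x v = c)
    {Ldag : Matrix V V ℝ} (hLdag : IsMoorePenrose (lap w) Ldag)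
    {d : V → ℝ} (hd : ∑ v, d v = 0) :
    sInf (flowEnergies w d) = d ⬝ᵥ (Ldag *ᵥ d) := by
  have hφ := lap_mulVec_pinv_mulVec hsymm hconn hLdag hd
  conv_lhs => rw [← hφ]
  rw [(isLeast_flowEnergies hsymm hnonneg _).csInf_eq, hφ, dotProduct_comm]

theorem one_vecMul_toBlocks₂₁_mul_inv {F T : Type*} [Fintype F] [Fintype T] [DecidableEq F]
    {M : Matrix (F ⊕ T) (F ⊕ T) ℝ} (hM : ∀ j, ∑ i, M i j = 0) (h₁₁ : IsUnit M.toBlocks₁₁.det) :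
    (1 : T → ℝ) ᵥ* (M.toBlocks₂₁ * M.toBlocks₁₁⁻¹) = -1 := by
  have hcols : (1 : T → ℝ) ᵥ* M.toBlocks₂₁ = -((1 : F → ℝ) ᵥ* M.toBlocks₁₁) := by
    funext j
    have := hM (Sum.inl j)
    rw [Fintype.sum_sum_type] at this
    simp only [vecMul, dotProduct, Pi.one_apply, one_mul, Pi.neg_apply, toBlocks₁₁, toBlocks₂₁,
      of_apply]
    linarith
  rw [← vecMul_vecMul, hcols, neg_vecMul, vecMul_vecMul, mul_nonsing_inv _ h₁₁, vecMul_one]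

noncomputable def hittingDemand {F T : Type*} [Fintype F] [Fintype T] [DecidableEq F]
    [DecidableEq T] (M : Matrix (F ⊕ T) (F ⊕ T) ℝ) (u : F) : F ⊕ T → ℝ :=
  Pi.single (Sum.inl u) 1 - Sum.elim (0 : F → ℝ)
    (fromCols (-(M.toBlocks₂₁ * M.toBlocks₁₁⁻¹)) 1 *ᵥ (Pi.single (Sum.inl u) 1 : F ⊕ T → ℝ))

theorem sum_hittingDemand {F T : Type*} [Fintype F] [Fintype T] [DecidableEq F]
    [DecidableEq T] {M : Matrix (F ⊕ T) (F ⊕ T) ℝ} (hM : ∀ j, ∑ i, M i j = 0)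
    (h₁₁ : IsUnit M.toBlocks₁₁.det) (u : F) : ∑ v, hittingDemand M u v = 0 := by
  have hcol := congrFun (one_vecMul_toBlocks₂₁_mul_inv hM h₁₁) u
  simp only [vecMul, dotProduct, Pi.one_apply, one_mul, Pi.neg_apply] at hcol
  simp [hittingDemand, Finset.sum_sub_distrib, Fintype.sum_sum_type, hcol]

theorem min_energy_to_terminals_general
    {F T : Type*} [Fintype F] [Fintype T] [DecidableEq F] [DecidableEq T]
    (w : F ⊕ T → F ⊕ T → ℝ)
    (hsymm : ∀ a b, w a b = w b a) (hnonneg : ∀ a b, 0 ≤ w a b)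
    (hconn : ∀ x : F ⊕ T → ℝ, (lap w) *ᵥ x = 0 → ∃ c, ∀ v, x v = c)
    (hFF : IsUnit ((lap w).toBlocks₁₁).det)
    (Ldag : Matrix (F ⊕ T) (F ⊕ T) ℝ) (hLdag : IsMoorePenrose (lap w) Ldag)
    (u : F) :
    -- the demand vector `1_u − P·1_u`, with `P·1_u` (supported on `T`) extended by zeros
    (fun d : F ⊕ T → ℝ =>
      sInf {En : ℝ | ∃ f : (F ⊕ T) → (F ⊕ T) → ℝ,
          (∀ a b, f a b = - f b a) ∧
          (∀ a b, w a b = 0 → f a b = 0) ∧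
          (∀ a, ∑ b, f a b = d a) ∧
          En = (1/2) * ∑ a, ∑ b, (if w a b = 0 then 0 else (f a b)^2 / w a b)}
        = d ⬝ᵥ (Ldag *ᵥ d))
      ((Pi.single (Sum.inl u) 1 : F ⊕ T → ℝ)
        - Sum.elim (0 : F → ℝ)
            ((Matrix.fromCols (-((lap w).toBlocks₂₁ * ((lap w).toBlocks₁₁)⁻¹)) 1)
              *ᵥ (Pi.single (Sum.inl u) 1 : F ⊕ T → ℝ))) :=
  sInf_flowEnergies_eq_pinv hsymm hnonneg hconn hLdag
    (sum_hittingDemand (sum_lap_apply_left hsymm) hFF u)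

/-- the minimum energy needed to route one unit of flow from `u ∈ F` to
the terminal set `T` according to the hitting-probability distribution `P·1_u`
equals `(1_u − P·1_u)ᵀ L† (1_u − P·1_u)`. -/
theorem min_energy_to_terminals
    {F T : Type*} [Fintype F] [Fintype T] [DecidableEq F] [DecidableEq T]
    [Nonempty T]
    (w : F ⊕ T → F ⊕ T → ℝ)
    (hsymm : ∀ a b, w a b = w b a) (hnonneg : ∀ a b, 0 ≤ w a b)
    (hconn : ∀ x : F ⊕ T → ℝ, (lap w) *ᵥ x = 0 → ∃ c, ∀ v, x v = c)
    (hFF : IsUnit ((lap w).toBlocks₁₁).det)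
    (Ldag : Matrix (F ⊕ T) (F ⊕ T) ℝ) (hLdag : IsMoorePenrose (lap w) Ldag)
    (u : F) :
    -- the demand vector `1_u − P·1_u`, with `P·1_u` (supported on `T`) extended by zeros
    (fun d : F ⊕ T → ℝ =>
      sInf {En : ℝ | ∃ f : (F ⊕ T) → (F ⊕ T) → ℝ,
          (∀ a b, f a b = - f b a) ∧
          (∀ a b, w a b = 0 → f a b = 0) ∧
          (∀ a, ∑ b, f a b = d a) ∧
          En = (1/2) * ∑ a, ∑ b, (if w a b = 0 then 0 else (f a b)^2 / w a b)}
        = d ⬝ᵥ (Ldag *ᵥ d))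
      ((Pi.single (Sum.inl u) 1 : F ⊕ T → ℝ)
        - Sum.elim (0 : F → ℝ)
            ((Matrix.fromCols (-((lap w).toBlocks₂₁ * ((lap w).toBlocks₁₁)⁻¹)) 1)
              *ᵥ (Pi.single (Sum.inl u) 1 : F ⊕ T → ℝ))) :=
  min_energy_to_terminals_general w hsymm hnonneg hconn hFF Ldag hLdag u
end

section
/- Let L_FF = D_F − A_F be the F×F block of a graph Laplacian, where D_F is its diagonal part and A_F the negation of the off-diagonal part, and suppose every connected component of the induced graph on F has an edge to T (so L_FF is invertible). Then the Neumann (Jacobi) series converges: L_FF^{-1} = Σ_{ℓ=0}^∞ (D_F^{-1}·A_F)^ℓ · D_F^{-1}. -/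
open Matrix BigOperators

namespace NeumannAux

variable {F : Type*} [Fintype F] [DecidableEq F]

lemma pow_entry_nonneg {M : Matrix F F ℝ} (h : ∀ a b, 0 ≤ M a b) :
    ∀ (ℓ : ℕ) (a b : F), 0 ≤ (M ^ ℓ) a b := by
  intro ℓ
  induction ℓ with
  | zero => intro a b; rw [pow_zero, Matrix.one_apply]; positivity
  | succ n ih =>
    intro a b
    rw [pow_succ, Matrix.mul_apply]
    exact Finset.sum_nonneg fun c _ => mul_nonneg (ih a c) (h c b)

/-- row sum of the ℓ-th power -/
noncomputable def rsum (M : Matrix F F ℝ) (ℓ : ℕ) (a : F) : ℝ := ∑ b, (M ^ ℓ) a b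

lemma rsum_zero (M : Matrix F F ℝ) (a : F) : rsum M 0 a = 1 := by
  simp [rsum, Matrix.one_apply]

lemma rsum_nonneg {M : Matrix F F ℝ} (h : ∀ a b, 0 ≤ M a b) (ℓ : ℕ) (a : F) :
    0 ≤ rsum M ℓ a :=
  Finset.sum_nonneg fun b _ => pow_entry_nonneg h ℓ a b

lemma entry_le_rsum {M : Matrix F F ℝ} (h : ∀ a b, 0 ≤ M a b) (ℓ : ℕ) (a b : F) :
    (M ^ ℓ) a b ≤ rsum M ℓ a :=
  Finset.single_le_sum (fun c _ => pow_entry_nonneg h ℓ a c) (Finset.mem_univ b)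

lemma rsum_add (M : Matrix F F ℝ) (k ℓ : ℕ) (a : F) :
    rsum M (k + ℓ) a = ∑ c, (M ^ k) a c * rsum M ℓ c := by
  simp only [rsum, pow_add, Matrix.mul_apply, Finset.mul_sum]
  rw [Finset.sum_comm]

lemma rsum_le_one {M : Matrix F F ℝ} (h0 : ∀ a b, 0 ≤ M a b)
    (h1 : ∀ a, ∑ b, M a b ≤ 1) : ∀ (ℓ : ℕ) (a : F), rsum M ℓ a ≤ 1 := by
  intro ℓ
  induction ℓ with
  | zero => intro a; rw [rsum_zero]
  | succ n ih =>
    intro a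
    rw [show n + 1 = 1 + n by ring, rsum_add]
    calc ∑ c, (M ^ 1) a c * rsum M n c
        ≤ ∑ c, (M ^ 1) a c * 1 := by
          refine Finset.sum_le_sum fun c _ => ?_
          exact mul_le_mul_of_nonneg_left (ih c) (pow_entry_nonneg h0 1 a c)
      _ ≤ 1 := by simpa [pow_one] using h1 a

lemma rsum_succ_le {M : Matrix F F ℝ} (h0 : ∀ a b, 0 ≤ M a b)
    (h1 : ∀ a, ∑ b, M a b ≤ 1) (ℓ : ℕ) (a : F) :
    rsum M (ℓ + 1) a ≤ rsum M ℓ a := by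
  rw [rsum_add]
  calc ∑ c, (M ^ ℓ) a c * rsum M 1 c
      ≤ ∑ c, (M ^ ℓ) a c * 1 := by
        refine Finset.sum_le_sum fun c _ => ?_
        exact mul_le_mul_of_nonneg_left (rsum_le_one h0 h1 1 c) (pow_entry_nonneg h0 ℓ a c)
    _ = rsum M ℓ a := by simp [rsum]

lemma rsum_antitone {M : Matrix F F ℝ} (h0 : ∀ a b, 0 ≤ M a b)
    (h1 : ∀ a, ∑ b, M a b ≤ 1) (a : F) : Antitone fun ℓ => rsum M ℓ a :=
  antitone_nat_of_succ_le fun n => rsum_succ_le h0 h1 n a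

lemma rsum_decay {M : Matrix F F ℝ} (h0 : ∀ a b, 0 ≤ M a b)
    {N : ℕ} {c : ℝ} (hc0 : 0 ≤ c) (hc : ∀ a, rsum M N a ≤ c) :
    ∀ (q : ℕ) (a : F), rsum M (q * N) a ≤ c ^ q := by
  intro q
  induction q with
  | zero => intro a; simpa using (rsum_zero M a).le
  | succ n ih =>
    intro a
    have h : (n + 1) * N = N + n * N := by ring
    rw [h, rsum_add]
    calc ∑ b, (M ^ N) a b * rsum M (n * N) b
        ≤ ∑ b, (M ^ N) a b * c ^ n := by
          refine Finset.sum_le_sum fun b _ => ?_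
          exact mul_le_mul_of_nonneg_left (ih b) (pow_entry_nonneg h0 N a b)
      _ = (∑ b, (M ^ N) a b) * c ^ n := by rw [Finset.sum_mul]
      _ ≤ c * c ^ n := mul_le_mul_of_nonneg_right (hc a) (pow_nonneg hc0 n)
      _ = c ^ (n + 1) := by ring

lemma summable_of_div_pow_bound {f : ℕ → ℝ} {c : ℝ} (hc0 : 0 < c) (hc1 : c < 1)
    {N : ℕ} (hN : 0 < N) (hf0 : ∀ ℓ, 0 ≤ f ℓ) (hf : ∀ ℓ, f ℓ ≤ c ^ (ℓ / N)) :
    Summable f := by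
  set ρ : ℝ := c ^ ((N : ℝ)⁻¹) with hρ
  have hρ0 : 0 ≤ ρ := Real.rpow_nonneg hc0.le _
  have hρ1 : ρ < 1 := Real.rpow_lt_one hc0.le hc1 (by positivity)
  refine Summable.of_nonneg_of_le hf0 (fun ℓ => ?_)
    ((summable_geometric_of_lt_one hρ0 hρ1).mul_left c⁻¹)
  have h1 : ρ ^ ℓ = c ^ ((N:ℝ)⁻¹ * ℓ) := by
    rw [hρ, ← Real.rpow_natCast (c ^ ((N : ℝ)⁻¹)) ℓ, ← Real.rpow_mul hc0.le]
  have h2 : ((N:ℝ))⁻¹ * ℓ - 1 ≤ ((ℓ / N : ℕ) : ℝ) := by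
    have h := Nat.lt_div_mul_add (a := ℓ) hN
    have h3 : (ℓ:ℝ) < (ℓ/N : ℕ) * N + N := by exact_mod_cast h
    have hNR : (0:ℝ) < N := by exact_mod_cast hN
    rw [sub_le_iff_le_add, inv_mul_eq_div, div_le_iff₀ hNR]
    nlinarith
  have key : c ^ (ℓ / N : ℕ) ≤ c⁻¹ * ρ ^ ℓ := by
    calc c ^ (ℓ/N : ℕ) = c ^ (((ℓ/N : ℕ):ℝ)) := (Real.rpow_natCast c _).symm
      _ ≤ c ^ ((N:ℝ)⁻¹ * ℓ - 1) := Real.rpow_le_rpow_of_exponent_ge hc0 hc1.le h2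
      _ = c ^ ((N:ℝ)⁻¹ * ℓ) / c ^ (1:ℝ) := Real.rpow_sub hc0 _ _
      _ = c⁻¹ * ρ ^ ℓ := by rw [Real.rpow_one, h1]; ring
  exact (hf ℓ).trans key

end NeumannAux

open NeumannAux

/-- if every connected component of the induced graph on `F` has an edge
to `T` (expressed as: every vertex of `F` can reach `T`), then `L_FF = D_F − A_F` is
invertible and the Neumann (Jacobi) series converges to its inverse:
`L_FF⁻¹ = Σ_{ℓ} (D_F⁻¹ A_F)^ℓ D_F⁻¹`. -/
theorem neumann_series_converges
    {F T : Type*} [Fintype F] [Fintype T] [DecidableEq F] [DecidableEq T]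
    [Nonempty T]
    (w : F ⊕ T → F ⊕ T → ℝ)
    (hsymm : ∀ a b, w a b = w b a) (hnonneg : ∀ a b, 0 ≤ w a b)
    (hloop : ∀ a, w a a = 0)
    (hreach : ∀ x : F, ∃ t : T,
      Relation.ReflTransGen (fun a b => w a b ≠ 0) (Sum.inl x) (Sum.inr t)) :
    IsUnit ((lap w).toBlocks₁₁).det ∧
    HasSum
      (fun ℓ : ℕ =>
        ((Matrix.diagonal (fun u : F => ∑ k, w (Sum.inl u) k))⁻¹
            * (Matrix.of fun a b : F => w (Sum.inl a) (Sum.inl b))) ^ ℓ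
          * (Matrix.diagonal (fun u : F => ∑ k, w (Sum.inl u) k))⁻¹)
      (((lap w).toBlocks₁₁)⁻¹) := by
  classical
  rcases isEmpty_or_nonempty F with hF | hF
  · haveI : Subsingleton (Matrix F F ℝ) :=
      ⟨fun X Y => by ext a b; exact isEmptyElim a⟩
    constructor
    · simp [Matrix.det_isEmpty]
    · have h0 : (fun ℓ : ℕ =>
          ((Matrix.diagonal (fun u : F => ∑ k, w (Sum.inl u) k))⁻¹
              * (Matrix.of fun a b : F => w (Sum.inl a) (Sum.inl b))) ^ ℓ
            * (Matrix.diagonal (fun u : F => ∑ k, w (Sum.inl u) k))⁻¹)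
          = fun _ => (0 : Matrix F F ℝ) := funext fun ℓ => Subsingleton.elim _ _
      rw [h0, Subsingleton.elim (((lap w).toBlocks₁₁)⁻¹) (0 : Matrix F F ℝ)]
      exact hasSum_zero
  set d : F → ℝ := fun u => ∑ k, w (Sum.inl u) k with hd_def
  set M : Matrix F F ℝ := Matrix.of fun a b : F => (d a)⁻¹ * w (Sum.inl a) (Sum.inl b)
    with hM_def
  -- positivity of degrees
  have hd : ∀ x : F, 0 < d x := by
    intro x
    obtain ⟨t, hp⟩ := hreach x
    rcases hp.cases_head with heq | ⟨b, hR, -⟩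
    · exact absurd heq (by simp)
    · have hb : 0 < w (Sum.inl x) b := (hnonneg _ _).lt_of_ne (Ne.symm hR)
      have hle : w (Sum.inl x) b ≤ d x :=
        Finset.single_le_sum (fun k _ => hnonneg _ k) (Finset.mem_univ b)
      linarith
  have hd0 : ∀ x : F, d x ≠ 0 := fun x => (hd x).ne'
  have hM0 : ∀ a b, 0 ≤ M a b := fun a b =>
    mul_nonneg (inv_nonneg.2 (hd a).le) (hnonneg _ _)
  have hsplit : ∀ a : F, d a = (∑ b : F, w (Sum.inl a) (Sum.inl b))
      + ∑ t : T, w (Sum.inl a) (Sum.inr t) := fun a => Fintype.sum_sum_type _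
  have hArow : ∀ a, ∑ b : F, w (Sum.inl a) (Sum.inl b) ≤ d a := by
    intro a
    rw [hsplit a]
    have : 0 ≤ ∑ t : T, w (Sum.inl a) (Sum.inr t) :=
      Finset.sum_nonneg fun t _ => hnonneg _ _
    linarith
  have hMsum : ∀ a, ∑ b, M a b = (d a)⁻¹ * ∑ b : F, w (Sum.inl a) (Sum.inl b) := by
    intro a
    rw [Finset.mul_sum]
    rfl
  have hMrow : ∀ a, ∑ b, M a b ≤ 1 := by
    intro a
    rw [hMsum a, inv_mul_eq_div, div_le_one (hd a)]
    exact hArow a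
  -- strictness step lemmas
  have hstep : ∀ (x y : F) (k : ℕ), M x y ≠ 0 → rsum M k y < 1 → rsum M (k+1) x < 1 := by
    intro x y k hxy hk
    have hMxy : 0 < M x y := (hM0 x y).lt_of_ne (Ne.symm hxy)
    rw [show k + 1 = 1 + k by ring, rsum_add]
    have hlt : ∑ c, (M ^ 1) x c * rsum M k c < ∑ c, (M ^ 1) x c := by
      apply Finset.sum_lt_sum
      · intro c _
        simpa [pow_one] using
          mul_le_mul_of_nonneg_left (rsum_le_one hM0 hMrow k c) (hM0 x c)
      · exact ⟨y, Finset.mem_univ y, by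
          simpa [pow_one] using mul_lt_of_lt_one_right hMxy hk⟩
    calc ∑ c, (M ^ 1) x c * rsum M k c < ∑ c, (M ^ 1) x c := hlt
      _ ≤ 1 := by simpa [pow_one] using hMrow x
  have hbase : ∀ (x : F) (t' : T), w (Sum.inl x) (Sum.inr t') ≠ 0 → rsum M 1 x < 1 := by
    intro x t' hxt
    have h1 : rsum M 1 x = (d x)⁻¹ * ∑ b : F, w (Sum.inl x) (Sum.inl b) := by
      rw [rsum, pow_one]; exact hMsum x
    rw [h1, inv_mul_eq_div, div_lt_one (hd x)]
    have hpos : 0 < ∑ t : T, w (Sum.inl x) (Sum.inr t) :=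
      lt_of_lt_of_le ((hnonneg _ _).lt_of_ne (Ne.symm hxt))
        (Finset.single_le_sum (fun t _ => hnonneg _ _) (Finset.mem_univ t'))
    rw [hsplit x]
    linarith
  -- every vertex eventually has strict row sum
  have hex : ∀ x : F, ∃ k, rsum M k x < 1 := by
    intro x
    obtain ⟨t, hp⟩ := hreach x
    suffices h : ∀ v, Relation.ReflTransGen (fun a b => w a b ≠ 0) v (Sum.inr t) →
        ∀ x : F, v = Sum.inl x → ∃ k, rsum M k x < 1 from h _ hp x rfl
    intro v hv
    induction hv using Relation.ReflTransGen.head_induction_on with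
    | refl => intro x hx; exact absurd hx (by simp)
    | @head a c h' hpath ih =>
      intro x hx
      subst hx
      cases c with
      | inl y =>
        obtain ⟨k, hk⟩ := ih y rfl
        have hMxy : M x y ≠ 0 := by
          simp only [hM_def, Matrix.of_apply]
          exact mul_ne_zero (inv_ne_zero (hd0 x)) h'
        exact ⟨k + 1, hstep x y k hMxy hk⟩
      | inr t' => exact ⟨1, hbase x t' h'⟩
  -- choose a uniform power N and a uniform bound c < 1
  choose kf hkf using hex
  set N : ℕ := Finset.univ.sup kf + 1 with hN_def
  have hNpos : 0 < N := Nat.succ_pos _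
  have hNx : ∀ x, rsum M N x < 1 := fun x =>
    lt_of_le_of_lt
      (rsum_antitone hM0 hMrow x
        ((Finset.le_sup (Finset.mem_univ x)).trans (Nat.le_succ _)))
      (hkf x)
  have hFne : (Finset.univ : Finset F).Nonempty := Finset.univ_nonempty
  set c : ℝ := Finset.univ.sup' hFne (fun x => rsum M N x) with hc_def
  have hcx : ∀ x, rsum M N x ≤ c := fun x => Finset.le_sup' _ (Finset.mem_univ x)
  have hc1 : c < 1 := (Finset.sup'_lt_iff hFne).2 fun x _ => hNx x
  obtain ⟨x₀⟩ := hF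
  have hc0 : 0 ≤ c := le_trans (rsum_nonneg hM0 N x₀) (hcx x₀)
  set c₂ : ℝ := max c (1/2) with hc₂_def
  have hc₂0 : 0 < c₂ := lt_of_lt_of_le (by norm_num) (le_max_right _ _)
  have hc₂1 : c₂ < 1 := max_lt hc1 (by norm_num)
  have hbound : ∀ (ℓ : ℕ) (a b : F), (M ^ ℓ) a b ≤ c₂ ^ (ℓ / N) := by
    intro ℓ a b
    calc (M ^ ℓ) a b ≤ rsum M ℓ a := entry_le_rsum hM0 ℓ a b
      _ ≤ rsum M ((ℓ / N) * N) a :=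
          rsum_antitone hM0 hMrow a (Nat.div_mul_le_self ℓ N)
      _ ≤ c ^ (ℓ / N) := rsum_decay hM0 hc0 hcx _ a
      _ ≤ c₂ ^ (ℓ / N) := pow_le_pow_left₀ hc0 (le_max_left _ _) _
  have hsum_entry : ∀ a b : F, Summable fun ℓ : ℕ => (M ^ ℓ) a b := fun a b =>
    summable_of_div_pow_bound hc₂0 hc₂1 hNpos
      (fun ℓ => pow_entry_nonneg hM0 ℓ a b) (fun ℓ => hbound ℓ a b)
  have hsummable : Summable fun ℓ : ℕ => M ^ ℓ := by
    apply Pi.summable.mpr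
    intro a
    apply Pi.summable.mpr
    intro b
    exact hsum_entry a b
  obtain ⟨S, hS⟩ := hsummable
  have hS1 : HasSum (fun ℓ : ℕ => M ^ (ℓ + 1)) (S - 1) := by
    refine (hasSum_nat_add_iff 1).2 ?_
    simpa using hS
  have hMS : M * S = S - 1 := by
    have h' : HasSum (fun ℓ : ℕ => M ^ (ℓ + 1)) (M * S) := by
      simpa [pow_succ'] using hS.mul_left M
    exact h'.unique hS1
  have hSM : S * M = S - 1 := by
    have h' : HasSum (fun ℓ : ℕ => M ^ (ℓ + 1)) (S * M) := by
      simpa [pow_succ] using hS.mul_right M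
    exact h'.unique hS1
  have h1 : (1 - M) * S = 1 := by
    rw [sub_mul, one_mul, hMS, sub_sub_cancel]
  have h2 : S * (1 - M) = 1 := by
    rw [mul_sub, mul_one, hSM, sub_sub_cancel]
  -- identify the block
  have hDM : Matrix.diagonal d * M = Matrix.of fun a b : F => w (Sum.inl a) (Sum.inl b) := by
    ext a b
    rw [Matrix.diagonal_mul]
    simp only [hM_def, Matrix.of_apply]
    exact mul_inv_cancel_left₀ (hd0 a) _
  have hLb : (lap w).toBlocks₁₁ =
      Matrix.diagonal d - Matrix.of (fun a b : F => w (Sum.inl a) (Sum.inl b)) := by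
    ext a b
    simp only [lap, Matrix.toBlocks₁₁, Matrix.sub_apply, Matrix.of_apply,
      Matrix.diagonal_apply]
    by_cases hab : a = b <;> simp [hab, hd_def]
  have hL : (lap w).toBlocks₁₁ = Matrix.diagonal d * (1 - M) := by
    rw [Matrix.mul_sub, mul_one, hDM, hLb]
  have hDinv : (Matrix.diagonal d)⁻¹ = Matrix.diagonal (fun x => (d x)⁻¹) := by
    refine Matrix.inv_eq_right_inv ?_
    have h : (fun i => d i * (d i)⁻¹) = fun _ => (1:ℝ) := funext fun i => mul_inv_cancel₀ (hd0 i)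
    rw [Matrix.diagonal_mul_diagonal, h, Matrix.diagonal_one]
  have hDinvM : (Matrix.diagonal d)⁻¹
      * Matrix.of (fun a b : F => w (Sum.inl a) (Sum.inl b)) = M := by
    rw [hDinv]
    ext a b
    rw [Matrix.diagonal_mul]
    simp [hM_def]
  have hU : IsUnit ((1 : Matrix F F ℝ) - M) := ⟨⟨1 - M, S, h1, h2⟩, rfl⟩
  have hdet1 : IsUnit ((1 : Matrix F F ℝ) - M).det := (Matrix.isUnit_iff_isUnit_det _).1 hU
  have hdetD : IsUnit (Matrix.diagonal d).det := by
    rw [Matrix.det_diagonal]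
    exact isUnit_iff_ne_zero.2 (Finset.prod_pos fun x _ => hd x).ne'
  constructor
  · rw [hL, Matrix.det_mul]
    exact hdetD.mul hdet1
  · have hLinv : ((lap w).toBlocks₁₁)⁻¹ = S * (Matrix.diagonal d)⁻¹ := by
      rw [hL, Matrix.mul_inv_rev, Matrix.inv_eq_right_inv h1]
    rw [hLinv, hDinvM]
    exact hS.mul_right _
end

section
/- Let 0 < ε ≤ 1/2 and k > 0 with ‖b‖_{L^†} ≤ k. Suppose L̃ is PSD with the same kernel as L and (1−ε)L ⪯ L̃ ⪯ (1+ε)L, suppose ‖b̃ − b‖_{L^†} ≤ ε·k, and suppose x̃ satisfies ‖x̃ − L̃^† b̃‖_{L̃} ≤ ε·‖L̃^† b̃‖_{L̃}. Then ‖x̃ − L^† b‖_L ≤ 10·ε·k. -/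
/-!
Put `u = L̃†b̃` and split `x̃ - L†b = (x̃ - u) + (u - L†b̃) + L†(b̃ - b)`. Since the kernels agree,
`b̃` lies in the range of both `L` and `L̃`. The energy norms of `L` and `L̃` agree up to a factor
`√(1 - ε)`, and the variational formula `bᵀL†b = max_y (2 bᵀy - yᵀLy)` gives
`‖u‖_{L̃} ≤ ‖b̃‖_{L†} / √(1 - ε)`; together these bound the solver error by `ε ‖b̃‖_{L†} / (1 - ε)`.
The vector `w = u - L†b̃` satisfies `Lw = (L - L̃)u`, so `‖w‖²_L = wᵀ(L - L̃)u ≤ ε ‖w‖_L ‖u‖_L`,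
which gives the same bound for the matrix approximation term. Finally
`‖L†(b̃ - b)‖_L = ‖b̃ - b‖_{L†} ≤ εk` and `‖b̃‖_{L†} ≤ (1 + ε)k`, so the total is at most `7εk`.
-/

open Matrix BigOperators

/-- The energy (semi-)norm `‖x‖_M = sqrt(xᵀ M x)` associated to a PSD matrix `M`. -/
noncomputable def qnorm {n : Type*} [Fintype n] (M : Matrix n n ℝ) (x : n → ℝ) : ℝ :=
  Real.sqrt (x ⬝ᵥ (M *ᵥ x))

theorem Matrix.PosSemidef.isSymm {n : Type*} {M : Matrix n n ℝ} (hM : M.PosSemidef) :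
    M.IsSymm :=
  isHermitian_iff_isSymm.mp hM.1

section

variable {n : Type*} [Fintype n]

section QuadraticForm

variable {A B M : Matrix n n ℝ}

theorem Matrix.IsSymm.dotProduct_mulVec_comm (hA : A.IsSymm) (x y : n → ℝ) :
    x ⬝ᵥ A *ᵥ y = y ⬝ᵥ A *ᵥ x := by
  simpa only [hA.eq] using dotProduct_transpose_mulVec A x y

theorem Matrix.PosSemidef.dotProduct_mulVec_self_nonneg (hM : M.PosSemidef) (x : n → ℝ) :
    0 ≤ x ⬝ᵥ M *ᵥ x := by
  simpa using hM.dotProduct_mulVec_nonneg x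

theorem qnorm_eq_norm (hM : M.PosSemidef) (x : n → ℝ) :
    qnorm M x = @norm _ (M.toSeminormedAddCommGroup hM).toNorm x := by
  rw [qnorm, dotProduct_comm]
  rfl

theorem qnorm_add_le (hM : M.PosSemidef) (x y : n → ℝ) :
    qnorm M (x + y) ≤ qnorm M x + qnorm M y := by
  simp only [qnorm_eq_norm hM]
  exact @norm_add_le _ (M.toSeminormedAddCommGroup hM).toSeminormedAddGroup x y

theorem sqrt_mul_qnorm_le {c : ℝ} (hc : 0 ≤ c) (hAB : ∀ x, c * (x ⬝ᵥ A *ᵥ x) ≤ x ⬝ᵥ B *ᵥ x)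
    (x : n → ℝ) : √c * qnorm A x ≤ qnorm B x := by
  rw [qnorm, qnorm, ← Real.sqrt_mul hc]
  exact Real.sqrt_le_sqrt (hAB x)

/-- Variational lower bound for `xᵀ A† x`, with `B` in the role of `A†`. -/
theorem Matrix.PosSemidef.two_mul_dotProduct_sub_le (hA : A.PosSemidef) {x : n → ℝ}
    (hx : A *ᵥ (B *ᵥ x) = x) (y : n → ℝ) :
    2 * (x ⬝ᵥ y) - y ⬝ᵥ A *ᵥ y ≤ x ⬝ᵥ B *ᵥ x := by
  have hnonneg := hA.dotProduct_mulVec_self_nonneg (y - B *ᵥ x)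
  simp only [mulVec_sub, hx, dotProduct_sub, sub_dotProduct] at hnonneg
  rw [hA.isSymm.dotProduct_mulVec_comm (B *ᵥ x) y, hx, dotProduct_comm (B *ᵥ x) x,
    dotProduct_comm y x] at hnonneg
  linarith

theorem two_mul_dotProduct_mulVec_le_of_abs_le (hM : M.IsSymm) {ε : ℝ} (hε : 0 < ε)
    (hMA : ∀ z, |z ⬝ᵥ M *ᵥ z| ≤ ε * (z ⬝ᵥ A *ᵥ z)) (x y : n → ℝ) :
    2 * (x ⬝ᵥ M *ᵥ y) ≤ ε ^ 2 * (x ⬝ᵥ A *ᵥ x) + y ⬝ᵥ A *ᵥ y := by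
  -- polarization: the `M`-forms at `ε x ± y` differ by `4 ε xᵀ M y`
  have hplus := (abs_le.mp (hMA (ε • x + y))).2
  have hminus := (abs_le.mp (hMA (ε • x - y))).1
  simp only [mulVec_add, mulVec_sub, mulVec_smul, dotProduct_add, dotProduct_sub,
    add_dotProduct, sub_dotProduct, dotProduct_smul, smul_dotProduct, smul_eq_mul] at hplus hminus
  rw [hM.dotProduct_mulVec_comm y x] at hplus hminus
  nlinarith

end QuadraticForm

namespace IsMoorePenrose

variable {A B C : Matrix n n ℝ}

theorem unique {B' : Matrix n n ℝ} (hB : IsMoorePenrose A B) (hB' : IsMoorePenrose A B') :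
    B = B' := by
  obtain ⟨hB1, hB2, hB3, hB4⟩ := hB
  obtain ⟨hB'1, hB'2, hB'3, hB'4⟩ := hB'
  have hAB : A * B = A * B' := by
    calc A * B = (A * B' * A * B)ᵀ := by rw [hB'1, hB3]
      _ = (A * B) * (A * B') := by rw [Matrix.mul_assoc, transpose_mul, hB3, hB'3]
      _ = A * B' := by rw [← Matrix.mul_assoc, hB1]
  have hBA : B * A = B' * A := by
    calc B * A = (B * A * (B' * A))ᵀ := by
          rw [show B * A * (B' * A) = B * (A * B' * A) by simp only [Matrix.mul_assoc], hB'1, hB4]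
      _ = (B' * A) * (B * A) := by rw [transpose_mul, hB4, hB'4]
      _ = B' * A := by rw [Matrix.mul_assoc, ← Matrix.mul_assoc A, hB1]
  calc B = B' * A * B := by rw [← hBA, hB2]
    _ = B' := by rw [Matrix.mul_assoc, hAB, ← Matrix.mul_assoc, hB'2]

theorem transpose_of_isSymm (hA : A.IsSymm) (h : IsMoorePenrose A B) :
    IsMoorePenrose A Bᵀ := by
  obtain ⟨h1, h2, h3, h4⟩ := h
  have hAt := hA.eq
  refine ⟨?_, ?_, ?_, ?_⟩
  · simpa only [transpose_mul, hAt, Matrix.mul_assoc] using congrArg transpose h1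
  · simpa only [transpose_mul, hAt, Matrix.mul_assoc] using congrArg transpose h2
  · rw [transpose_mul, transpose_transpose, hAt, ← h4, transpose_mul, hAt]
  · rw [transpose_mul, transpose_transpose, hAt, ← h3, transpose_mul, hAt]

theorem isSymm (hA : A.IsSymm) (h : IsMoorePenrose A B) : B.IsSymm :=
  (h.transpose_of_isSymm hA).unique h

theorem mul_comm (hA : A.IsSymm) (h : IsMoorePenrose A B) : A * B = B * A := by
  rw [← h.2.2.1, transpose_mul, hA.eq, (h.isSymm hA).eq]

theorem mulVec_mulVec_of_mem_range (h : IsMoorePenrose A B) {b : n → ℝ}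
    (hb : ∃ y, A *ᵥ y = b) : A *ᵥ (B *ᵥ b) = b := by
  obtain ⟨y, rfl⟩ := hb
  rw [mulVec_mulVec, mulVec_mulVec, h.1]

theorem exists_mulVec_eq_of_ker_le (hA : A.IsSymm) (hC : C.IsSymm) (h : IsMoorePenrose A B)
    (hker : ∀ x, A *ᵥ x = 0 → C *ᵥ x = 0) {b : n → ℝ} (hb : ∃ y, C *ᵥ y = b) :
    ∃ y, A *ᵥ y = b := by
  refine ⟨B *ᵥ b, ?_⟩
  obtain ⟨y, hy⟩ := hb
  have hP : (A * B).IsSymm := h.2.2.1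
  have hAP : A * (A * B) = A := by rw [h.mul_comm hA, ← Matrix.mul_assoc, h.1]
  -- `b = C y` is orthogonal to the range of `1 - A B`, which lies in `ker A ⊆ ker C`
  have horth : ∀ v, b ⬝ᵥ (v - (A * B) *ᵥ v) = 0 := fun v => by
    rw [← hy, dotProduct_comm, hC.dotProduct_mulVec_comm,
      hker _ (by rw [mulVec_sub, mulVec_mulVec, hAP, sub_self]), dotProduct_zero]
  have hd : (b - (A * B) *ᵥ b) ⬝ᵥ (b - (A * B) *ᵥ b) = 0 := by
    rw [sub_dotProduct, dotProduct_comm ((A * B) *ᵥ b), hP.dotProduct_mulVec_comm,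
      ← dotProduct_sub]
    exact horth _
  rw [mulVec_mulVec, ← sub_eq_zero.mp (dotProduct_self_eq_zero.mp hd)]

theorem dotProduct_mulVec_mulVec (hA : A.IsSymm) (h : IsMoorePenrose A B) (x : n → ℝ) :
    (B *ᵥ x) ⬝ᵥ A *ᵥ (B *ᵥ x) = x ⬝ᵥ B *ᵥ x := by
  rw [dotProduct_comm, (h.isSymm hA).dotProduct_mulVec_comm, mulVec_mulVec, mulVec_mulVec, h.2.1]

theorem qnorm_mulVec (hA : A.IsSymm) (h : IsMoorePenrose A B) (x : n → ℝ) :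
    qnorm A (B *ᵥ x) = qnorm B x :=
  congrArg Real.sqrt (h.dotProduct_mulVec_mulVec hA x)

theorem posSemidef (hA : A.PosSemidef) (h : IsMoorePenrose A B) : B.PosSemidef :=
  .of_dotProduct_mulVec_nonneg (isHermitian_iff_isSymm.mpr (h.isSymm hA.isSymm)) fun x => by
    simpa [← h.dotProduct_mulVec_mulVec hA.isSymm] using hA.dotProduct_mulVec_self_nonneg (B *ᵥ x)

end IsMoorePenrose

section SpectralApproximation

variable {L Lt Ldag Ltdag : Matrix n n ℝ} {b : n → ℝ} {c ε : ℝ}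

theorem sqrt_mul_qnorm_pinv_mulVec_le (hL : L.PosSemidef) (hb : L *ᵥ (Ldag *ᵥ b) = b)
    (hbt : Lt *ᵥ (Ltdag *ᵥ b) = b) (hc : 0 ≤ c)
    (hlow : ∀ x, c * (x ⬝ᵥ L *ᵥ x) ≤ x ⬝ᵥ Lt *ᵥ x) :
    √c * qnorm Lt (Ltdag *ᵥ b) ≤ qnorm Ldag b := by
  rw [qnorm, qnorm, ← Real.sqrt_mul hc]
  refine Real.sqrt_le_sqrt ?_
  set u := Ltdag *ᵥ b
  have hu : u ⬝ᵥ Lt *ᵥ u = b ⬝ᵥ u := by rw [hbt, dotProduct_comm]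
  have hvar := hL.two_mul_dotProduct_sub_le hb (c • u)
  simp only [mulVec_smul, dotProduct_smul, smul_dotProduct, smul_eq_mul] at hvar
  nlinarith [hlow u]

theorem mul_qnorm_pinv_mulVec_le (hL : L.PosSemidef) (hb : L *ᵥ (Ldag *ᵥ b) = b)
    (hbt : Lt *ᵥ (Ltdag *ᵥ b) = b) (hc : 0 ≤ c)
    (hlow : ∀ x, c * (x ⬝ᵥ L *ᵥ x) ≤ x ⬝ᵥ Lt *ᵥ x) :
    c * qnorm L (Ltdag *ᵥ b) ≤ qnorm Ldag b :=
  calc c * qnorm L (Ltdag *ᵥ b) = √c * (√c * qnorm L (Ltdag *ᵥ b)) := by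
        rw [← mul_assoc, Real.mul_self_sqrt hc]
    _ ≤ √c * qnorm Lt (Ltdag *ᵥ b) := by gcongr; exact sqrt_mul_qnorm_le hc hlow _
    _ ≤ qnorm Ldag b := sqrt_mul_qnorm_pinv_mulVec_le hL hb hbt hc hlow

theorem mul_qnorm_sub_pinv_mulVec_le (hL : L.PosSemidef) (hb : L *ᵥ (Ldag *ᵥ b) = b)
    (hbt : Lt *ᵥ (Ltdag *ᵥ b) = b) (hc : 0 ≤ c)
    (hlow : ∀ x, c * (x ⬝ᵥ L *ᵥ x) ≤ x ⬝ᵥ Lt *ᵥ x) {δ : ℝ} (hδ : 0 ≤ δ) {x : n → ℝ}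
    (hx : qnorm Lt (x - Ltdag *ᵥ b) ≤ δ * qnorm Lt (Ltdag *ᵥ b)) :
    c * qnorm L (x - Ltdag *ᵥ b) ≤ δ * qnorm Ldag b :=
  calc c * qnorm L (x - Ltdag *ᵥ b) = √c * (√c * qnorm L (x - Ltdag *ᵥ b)) := by
        rw [← mul_assoc, Real.mul_self_sqrt hc]
    _ ≤ √c * (δ * qnorm Lt (Ltdag *ᵥ b)) :=
        mul_le_mul_of_nonneg_left ((sqrt_mul_qnorm_le hc hlow _).trans hx) (Real.sqrt_nonneg c)
    _ = δ * (√c * qnorm Lt (Ltdag *ᵥ b)) := by ring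
    _ ≤ δ * qnorm Ldag b := by gcongr; exact sqrt_mul_qnorm_pinv_mulVec_le hL hb hbt hc hlow

theorem qnorm_pinv_mulVec_sub_pinv_mulVec_le (hL : L.PosSemidef) (hLt : Lt.IsSymm)
    (hε : 0 < ε) (happrox : ∀ x : n → ℝ,
      (1 - ε) * (x ⬝ᵥ L *ᵥ x) ≤ x ⬝ᵥ Lt *ᵥ x ∧ x ⬝ᵥ Lt *ᵥ x ≤ (1 + ε) * (x ⬝ᵥ L *ᵥ x))
    (hb : L *ᵥ (Ldag *ᵥ b) = b) (hbt : Lt *ᵥ (Ltdag *ᵥ b) = b) :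
    qnorm L (Ltdag *ᵥ b - Ldag *ᵥ b) ≤ ε * qnorm L (Ltdag *ᵥ b) := by
  set u := Ltdag *ᵥ b
  set w := u - Ldag *ᵥ b
  have hLw : L *ᵥ w = (L - Lt) *ᵥ u := by rw [mulVec_sub, hb, sub_mulVec, hbt]
  have hsymm : (L - Lt).IsSymm := by rw [IsSymm, transpose_sub, hL.isSymm.eq, hLt.eq]
  have hbound : ∀ z, |z ⬝ᵥ (L - Lt) *ᵥ z| ≤ ε * (z ⬝ᵥ L *ᵥ z) := fun z => by
    rw [sub_mulVec, dotProduct_sub, abs_le]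
    constructor <;> linarith [happrox z]
  have hpolar := two_mul_dotProduct_mulVec_le_of_abs_le hsymm hε hbound u w
  rw [hsymm.dotProduct_mulVec_comm, ← hLw] at hpolar
  rw [qnorm, qnorm, ← Real.sqrt_sq hε.le, ← Real.sqrt_mul (sq_nonneg ε)]
  exact Real.sqrt_le_sqrt (by linarith)

theorem mul_qnorm_pinv_mulVec_sub_pinv_mulVec_le (hL : L.PosSemidef) (hLt : Lt.IsSymm)
    (hε : 0 < ε) (hε1 : ε ≤ 1) (happrox : ∀ x : n → ℝ,
      (1 - ε) * (x ⬝ᵥ L *ᵥ x) ≤ x ⬝ᵥ Lt *ᵥ x ∧ x ⬝ᵥ Lt *ᵥ x ≤ (1 + ε) * (x ⬝ᵥ L *ᵥ x))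
    (hb : L *ᵥ (Ldag *ᵥ b) = b) (hbt : Lt *ᵥ (Ltdag *ᵥ b) = b) :
    (1 - ε) * qnorm L (Ltdag *ᵥ b - Ldag *ᵥ b) ≤ ε * qnorm Ldag b :=
  calc (1 - ε) * qnorm L (Ltdag *ᵥ b - Ldag *ᵥ b)
        ≤ (1 - ε) * (ε * qnorm L (Ltdag *ᵥ b)) :=
        mul_le_mul_of_nonneg_left (qnorm_pinv_mulVec_sub_pinv_mulVec_le hL hLt hε happrox hb hbt)
          (by linarith)
    _ = ε * ((1 - ε) * qnorm L (Ltdag *ᵥ b)) := by ring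
    _ ≤ ε * qnorm Ldag b := by
        gcongr
        exact mul_qnorm_pinv_mulVec_le hL hb hbt (by linarith) fun x => (happrox x).1

end SpectralApproximation

end

theorem approximate_solver_composition_general
    {n : Type*} [Fintype n]
    (L Lt : Matrix n n ℝ) (hL : L.PosSemidef) (hLt : Lt.PosSemidef)
    (hker : ∀ x : n → ℝ, L *ᵥ x = 0 ↔ Lt *ᵥ x = 0)
    (ε k : ℝ) (hε0 : 0 < ε) (hε : ε ≤ 1 / 2)
    (happrox : ∀ x : n → ℝ,
      (1 - ε) * (x ⬝ᵥ (L *ᵥ x)) ≤ x ⬝ᵥ (Lt *ᵥ x) ∧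
      x ⬝ᵥ (Lt *ᵥ x) ≤ (1 + ε) * (x ⬝ᵥ (L *ᵥ x)))
    (Ldag Ltdag : Matrix n n ℝ)
    (hLdag : IsMoorePenrose L Ldag) (hLtdag : IsMoorePenrose Lt Ltdag)
    (b bt : n → ℝ) (hbt : ∃ y, L *ᵥ y = bt)
    (hbk : qnorm Ldag b ≤ k)
    (hclose : qnorm Ldag (bt - b) ≤ ε * k)
    (xt : n → ℝ)
    (hsolve : qnorm Lt (xt - Ltdag *ᵥ bt) ≤ ε * qnorm Lt (Ltdag *ᵥ bt)) :
    qnorm L (xt - Ldag *ᵥ b) ≤ 10 * ε * k := by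
  have hbtL : L *ᵥ (Ldag *ᵥ bt) = bt := hLdag.mulVec_mulVec_of_mem_range hbt
  have hbtLt : Lt *ᵥ (Ltdag *ᵥ bt) = bt := hLtdag.mulVec_mulVec_of_mem_range <|
    hLtdag.exists_mulVec_eq_of_ker_le hLt.isSymm hL.isSymm (fun x => (hker x).mpr) hbt
  have hsolver : (1 - ε) * qnorm L (xt - Ltdag *ᵥ bt) ≤ ε * qnorm Ldag bt :=
    mul_qnorm_sub_pinv_mulVec_le hL hbtL hbtLt (by linarith) (fun x => (happrox x).1) hε0.le
      hsolve
  have hmatrix : (1 - ε) * qnorm L (Ltdag *ᵥ bt - Ldag *ᵥ bt) ≤ ε * qnorm Ldag bt :=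
    mul_qnorm_pinv_mulVec_sub_pinv_mulVec_le hL hLt.isSymm hε0 (by linarith) happrox hbtL hbtLt
  have hdemand : qnorm L (Ldag *ᵥ (bt - b)) ≤ ε * k :=
    (hLdag.qnorm_mulVec hL.isSymm _).trans_le hclose
  have hbt_le : qnorm Ldag bt ≤ (1 + ε) * k := by
    have := qnorm_add_le (hLdag.posSemidef hL) b (bt - b)
    rw [add_sub_cancel] at this
    linarith
  have hsplit : qnorm L (xt - Ldag *ᵥ b) ≤ qnorm L (xt - Ltdag *ᵥ bt) +
      qnorm L (Ltdag *ᵥ bt - Ldag *ᵥ bt) + qnorm L (Ldag *ᵥ (bt - b)) :=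
    calc qnorm L (xt - Ldag *ᵥ b) = qnorm L ((xt - Ltdag *ᵥ bt) +
          (Ltdag *ᵥ bt - Ldag *ᵥ bt) + Ldag *ᵥ (bt - b)) := by
          rw [mulVec_sub]; abel_nf
      _ ≤ _ := (qnorm_add_le hL _ _).trans (add_le_add_left (qnorm_add_le hL _ _) _)
  have hk : 0 ≤ k := (Real.sqrt_nonneg _).trans hbk
  have hnonneg : 0 ≤ qnorm L (xt - Ltdag *ᵥ bt) + qnorm L (Ltdag *ᵥ bt - Ldag *ᵥ bt) :=
    add_nonneg (Real.sqrt_nonneg _) (Real.sqrt_nonneg _)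
  nlinarith [mul_nonneg hnonneg (by linarith : (0 : ℝ) ≤ 1 / 2 - ε),
    mul_nonneg (mul_nonneg hε0.le hk) (by linarith : (0 : ℝ) ≤ 1 / 2 - ε),
    mul_le_mul_of_nonneg_left hbt_le hε0.le]

/-- approximate solver composition — if `L̃ ≈_ε L`, `b̃ ≈ b`, and `x̃`
approximately solves `L̃ x = b̃`, then `x̃` approximately solves `L x = b`:
`‖x̃ − L†b‖_L ≤ 10·ε·k`. -/
theorem approximate_solver_composition
    {n : Type*} [Fintype n] [DecidableEq n]
    (L Lt : Matrix n n ℝ) (hL : L.PosSemidef) (hLt : Lt.PosSemidef)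
    (hker : ∀ x : n → ℝ, L *ᵥ x = 0 ↔ Lt *ᵥ x = 0)
    (ε k : ℝ) (hε0 : 0 < ε) (hε : ε ≤ 1 / 2) (hk : 0 < k)
    (happrox : ∀ x : n → ℝ,
      (1 - ε) * (x ⬝ᵥ (L *ᵥ x)) ≤ x ⬝ᵥ (Lt *ᵥ x) ∧
      x ⬝ᵥ (Lt *ᵥ x) ≤ (1 + ε) * (x ⬝ᵥ (L *ᵥ x)))
    (Ldag Ltdag : Matrix n n ℝ)
    (hLdag : IsMoorePenrose L Ldag) (hLtdag : IsMoorePenrose Lt Ltdag)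
    (b bt : n → ℝ) (hb : ∃ y, L *ᵥ y = b) (hbt : ∃ y, L *ᵥ y = bt)
    (hbk : qnorm Ldag b ≤ k)
    (hclose : qnorm Ldag (bt - b) ≤ ε * k)
    (xt : n → ℝ)
    (hsolve : qnorm Lt (xt - Ltdag *ᵥ bt) ≤ ε * qnorm Lt (Ltdag *ᵥ bt)) :
    qnorm L (xt - Ldag *ᵥ b) ≤ 10 * ε * k :=
  approximate_solver_composition_general L Lt hL hLt hker ε k hε0 hε happrox Ldag Ltdag hLdag hLtdag
    b bt hbt hbk hclose xt hsolve
end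

section
/- Let L be the Laplacian of a connected graph partitioned by F and T (with L_FF invertible) and let P = [−L_TF·L_FF^{-1}, I_T] be the projection. Then for every b, ‖b_F‖²_{L_FF^{-1}} = ‖b_F − P·b_F‖²_{L^†}, where b_F is b restricted to F (zero on T) and P·b_F is viewed as an n-vector supported on T. In other words, the energy of routing b_F inside F equals the energy of routing the demand b_F − P·b_F in the whole graph. -/
open Matrix BigOperators

/-! With `x = L_FF⁻¹ b_F`, the vector `(x, 0)` is the potential extending `x` by zero, and
`L (x, 0) = (b_F, L_TF x)`, which is exactly the demand `b_F − P b_F`. For a symmetric `L` and any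
`L†` with `L L† L = L`, the energy of a demand `L y` is `y ⬝ L y`; for `y = (x, 0)` this is
`x ⬝ b_F = b_F ⬝ L_FF⁻¹ b_F`. -/

lemma lap_isSymm {V : Type*} [Fintype V] [DecidableEq V] (w : V → V → ℝ)
    (hsymm : ∀ a b, w a b = w b a) : (lap w).IsSymm := by
  ext i j
  simp only [lap, transpose_apply, Matrix.sub_apply, diagonal_apply, of_apply]
  rcases eq_or_ne i j with rfl | h
  · rfl
  · simp [h, Ne.symm h, hsymm i j]

section

variable {R n : Type*} [CommRing R] [Fintype n]

lemma mulVec_dotProduct_mulVec_mulVec_of_mul_mul_eq {A B : Matrix n n R} (hA : A.IsSymm)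
    (hAB : A * B * A = A) (y : n → R) :
    (A *ᵥ y) ⬝ᵥ (B *ᵥ (A *ᵥ y)) = y ⬝ᵥ (A *ᵥ y) := by
  calc (A *ᵥ y) ⬝ᵥ (B *ᵥ (A *ᵥ y)) = y ⬝ᵥ (Aᵀ *ᵥ (B *ᵥ (A *ᵥ y))) := by
        rw [dotProduct_mulVec y, vecMul_transpose]
    _ = y ⬝ᵥ (A *ᵥ y) := by rw [hA.eq, mulVec_mulVec, mulVec_mulVec, hAB]

end

section

variable {R F T : Type*} [CommRing R] [Fintype F] [Fintype T] [DecidableEq F]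
  (A : Matrix (F ⊕ T) (F ⊕ T) R)

lemma mulVec_sumElim_inv_mulVec_zero (hA : IsUnit A.toBlocks₁₁.det) (u : F → R) :
    A *ᵥ Sum.elim (A.toBlocks₁₁⁻¹ *ᵥ u) 0
      = Sum.elim u (A.toBlocks₂₁ *ᵥ (A.toBlocks₁₁⁻¹ *ᵥ u)) := by
  conv_lhs => enter [1]; rw [← fromBlocks_toBlocks A]
  rw [fromBlocks_mulVec, Sum.elim_comp_inl, Sum.elim_comp_inr, mulVec_zero, add_zero,
    mulVec_zero, add_zero, mulVec_mulVec, mul_nonsing_inv _ hA, one_mulVec]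

lemma sumElim_sub_sumElim_fromCols_mulVec [DecidableEq T] (u : F → R) :
    Sum.elim u (0 : T → R) - Sum.elim (0 : F → R)
        (fromCols (-(A.toBlocks₂₁ * A.toBlocks₁₁⁻¹)) (1 : Matrix T T R) *ᵥ Sum.elim u 0)
      = Sum.elim u (A.toBlocks₂₁ *ᵥ (A.toBlocks₁₁⁻¹ *ᵥ u)) := by
  rw [fromCols_mulVec_sumElim, mulVec_zero, add_zero, neg_mulVec, ← mulVec_mulVec]
  ext (i | i) <;> simp

end

theorem block_energy_eq_projected_energy_general
    {F T : Type*} [Fintype F] [Fintype T] [DecidableEq F] [DecidableEq T]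
    (w : F ⊕ T → F ⊕ T → ℝ)
    (hsymm : ∀ a b, w a b = w b a)
    (hFF : IsUnit ((lap w).toBlocks₁₁).det)
    (Ldag : Matrix (F ⊕ T) (F ⊕ T) ℝ) (hLdag : IsMoorePenrose (lap w) Ldag)
    (b : F ⊕ T → ℝ) :
    -- `bF` is `b` restricted to `F` (zero on `T`); `P·bF` is extended by zeros on `F`
    (fun (bF : F ⊕ T → ℝ) (d : F ⊕ T → ℝ) =>
        (b ∘ Sum.inl) ⬝ᵥ (((lap w).toBlocks₁₁)⁻¹ *ᵥ (b ∘ Sum.inl))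
          = d ⬝ᵥ (Ldag *ᵥ d))
      (Sum.elim (b ∘ Sum.inl) (0 : T → ℝ))
      (Sum.elim (b ∘ Sum.inl) (0 : T → ℝ)
        - Sum.elim (0 : F → ℝ)
            ((Matrix.fromCols (-((lap w).toBlocks₂₁ * ((lap w).toBlocks₁₁)⁻¹)) 1)
              *ᵥ Sum.elim (b ∘ Sum.inl) (0 : T → ℝ))) := by
  beta_reduce
  rw [sumElim_sub_sumElim_fromCols_mulVec, ← mulVec_sumElim_inv_mulVec_zero _ hFF,
    mulVec_dotProduct_mulVec_mulVec_of_mul_mul_eq (lap_isSymm w hsymm) hLdag.1,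
    mulVec_sumElim_inv_mulVec_zero _ hFF, sumElim_dotProduct_sumElim, zero_dotProduct, add_zero,
    dotProduct_comm]

/-- the energy of routing `b_F` inside the block `L_FF` equals the
energy of routing the demand `b_F − P·b_F` in the whole graph:
`‖b_F‖²_{L_FF⁻¹} = ‖b_F − P·b_F‖²_{L†}`. -/
theorem block_energy_eq_projected_energy
    {F T : Type*} [Fintype F] [Fintype T] [DecidableEq F] [DecidableEq T]
    [Nonempty T]
    (w : F ⊕ T → F ⊕ T → ℝ)
    (hsymm : ∀ a b, w a b = w b a) (hnonneg : ∀ a b, 0 ≤ w a b)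
    (hconn : ∀ x : F ⊕ T → ℝ, (lap w) *ᵥ x = 0 → ∃ c, ∀ v, x v = c)
    (hFF : IsUnit ((lap w).toBlocks₁₁).det)
    (Ldag : Matrix (F ⊕ T) (F ⊕ T) ℝ) (hLdag : IsMoorePenrose (lap w) Ldag)
    (b : F ⊕ T → ℝ) :
    -- `bF` is `b` restricted to `F` (zero on `T`); `P·bF` is extended by zeros on `F`
    (fun (bF : F ⊕ T → ℝ) (d : F ⊕ T → ℝ) =>
        (b ∘ Sum.inl) ⬝ᵥ (((lap w).toBlocks₁₁)⁻¹ *ᵥ (b ∘ Sum.inl))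
          = d ⬝ᵥ (Ldag *ᵥ d))
      (Sum.elim (b ∘ Sum.inl) (0 : T → ℝ))
      (Sum.elim (b ∘ Sum.inl) (0 : T → ℝ)
        - Sum.elim (0 : F → ℝ)
            ((Matrix.fromCols (-((lap w).toBlocks₂₁ * ((lap w).toBlocks₁₁)⁻¹)) 1)
              *ᵥ Sum.elim (b ∘ Sum.inl) (0 : T → ℝ))) :=
  block_energy_eq_projected_energy_general w hsymm hFF Ldag hLdag b
end

section
/- Let g⁽¹⁾ and g⁽²⁾ be (ε, j)-approximations of probability mass functions f⁽¹⁾ and f⁽²⁾ over {0,…,N}, meaning there exist nonnegative matrices H⁽ᵃ⁾ with row sums f⁽ᵃ⁾(x), column sums g⁽ᵃ⁾(k), and H⁽ᵃ⁾_{x,k} = 0 unless x ∈ [(1+ε)^k, (1+ε)^{k+j}). Then, defining g(k₃) = Σ over pairs (k₁,k₂) with (1+ε)^{k₁}+(1+ε)^{k₂} ∈ [(1+ε)^{k₃}, (1+ε)^{k₃+1}) of g⁽¹⁾(k₁)·g⁽²⁾(k₂), g is an (ε, j+1)-approximation of the convolution f⁽¹⁾ * f⁽²⁾. -/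
open BigOperators

/-- `g` is an `(ε, j)`-approximation of the probability mass function `f` supported on
`{0, …, N}`, with bucket indices `k ∈ {0, …, L}`: there is a nonnegative matrix `H`
whose rows sum to `f`, whose columns sum to `g`, and with `H x k = 0` unless
`x ∈ [(1+ε)^k, (1+ε)^{k+j})`. -/
lemma conv_sum (N : ℕ) (a b : ℕ → ℝ) (ha : ∀ x, N < x → a x = 0) (hb : ∀ y, N < y → b y = 0) :
    ∑ z ∈ Finset.range (2 * N + 1), ∑ x ∈ Finset.range (z + 1), a x * b (z - x)
      = (∑ x ∈ Finset.range (N + 1), a x) * (∑ y ∈ Finset.range (N + 1), b y) := by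
  rw [Finset.sum_mul_sum, ← Finset.sum_product', Finset.sum_sigma']
  have h1 : ∑ p ∈ (Finset.range (2*N+1)).sigma (fun z => Finset.range (z+1)),
      a p.2 * b (p.1 - p.2)
      = ∑ p ∈ (Finset.range (2*N+1) ×ˢ Finset.range (2*N+1)).filter
          (fun p => p.1 + p.2 ≤ 2*N), a p.1 * b p.2 := by
    apply Finset.sum_nbij' (fun p => (p.2, p.1 - p.2)) (fun p => ⟨p.1 + p.2, p.1⟩)
    · intro p hp
      simp only [Finset.mem_sigma, Finset.mem_range] at hp
      simp only [Finset.mem_filter, Finset.mem_product, Finset.mem_range]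
      omega
    · intro p hp
      simp only [Finset.mem_filter, Finset.mem_product, Finset.mem_range] at hp
      simp only [Finset.mem_sigma, Finset.mem_range]
      omega
    · intro p hp
      simp only [Finset.mem_sigma, Finset.mem_range] at hp
      set_option linter.unnecessarySeqFocus false in
      ext <;> simp <;> omega
    · intro p hp
      simp only [Finset.mem_filter, Finset.mem_product, Finset.mem_range] at hp
      simp
    · intro p hp; rfl
  rw [h1]
  rw [Finset.sum_filter_of_ne, ← Finset.sum_subset]
  · intro p hp
    simp only [Finset.mem_product, Finset.mem_range] at *
    omega
  · intro p hp hnp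
    simp only [Finset.mem_product, Finset.mem_range] at hp hnp
    rcases Nat.lt_or_ge N p.1 with h | h
    · rw [ha _ h, zero_mul]
    · rw [hb, mul_zero]; omega
  · intro p hp hne
    by_contra hgt
    simp only [Finset.mem_product, Finset.mem_range] at hp
    push_neg at hgt
    rcases Nat.lt_or_ge N p.1 with h | h
    · exact hne (by rw [ha _ h, zero_mul])
    · exact hne (by rw [hb, mul_zero]; omega)

lemma exists_unique_bucket {b s : ℝ} (hb : 1 < b) (hs : 1 ≤ s) :
    ∃! k : ℕ, b ^ k ≤ s ∧ s < b ^ (k + 1) := by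
  have hex : ∃ n : ℕ, s < b ^ (n + 1) := by
    obtain ⟨n, hn⟩ := pow_unbounded_of_one_lt s hb
    exact ⟨n, lt_of_lt_of_le hn (pow_le_pow_right₀ hb.le (by omega))⟩
  classical
  have hfind : b ^ (Nat.find hex) ≤ s := by
    rcases Nat.eq_zero_or_pos (Nat.find hex) with h0 | h0
    · rw [h0]; simpa using hs
    · have h3 := Nat.find_min hex (m := Nat.find hex - 1) (by omega)
      push_neg at h3
      calc b ^ Nat.find hex = b ^ (Nat.find hex - 1 + 1) := by congr 1; omega
        _ ≤ s := h3
  refine ⟨Nat.find hex, ⟨hfind, Nat.find_spec hex⟩, ?_⟩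
  intro k hk
  have l1 : k < Nat.find hex + 1 := by
    rw [← pow_lt_pow_iff_right₀ hb]
    exact lt_of_le_of_lt hk.1 (Nat.find_spec hex)
  have l2 : Nat.find hex < k + 1 := by
    rw [← pow_lt_pow_iff_right₀ hb]
    exact lt_of_le_of_lt hfind hk.2
  omega

def IsApprox (ε : ℝ) (j N L : ℕ) (f g : ℕ → ℝ) : Prop :=
  (∀ x, N < x → f x = 0) ∧ (∀ k, L < k → g k = 0) ∧
  ∃ H : ℕ → ℕ → ℝ,
    (∀ x k, 0 ≤ H x k) ∧
    (∀ x, ∑ k ∈ Finset.range (L + 1), H x k = f x) ∧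
    (∀ k, ∑ x ∈ Finset.range (N + 1), H x k = g k) ∧
    (∀ (x k : ℕ), ¬ ((1 + ε) ^ k ≤ (x : ℝ) ∧ (x : ℝ) < (1 + ε) ^ (k + j)) → H x k = 0)

/-- the bucketed combination of two `(ε, j)`-approximations is an
`(ε, j+1)`-approximation of the convolution. -/
theorem convolution_of_approximations
    (ε : ℝ) (hε : 0 < ε) (j : ℕ) (hj : 1 ≤ j) (N L : ℕ)
    (f₁ f₂ g₁ g₂ : ℕ → ℝ)
    (hf₁0 : ∀ x, 0 ≤ f₁ x) (hf₁1 : ∑ x ∈ Finset.range (N + 1), f₁ x = 1)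
    (hf₂0 : ∀ x, 0 ≤ f₂ x) (hf₂1 : ∑ x ∈ Finset.range (N + 1), f₂ x = 1)
    (h₁ : IsApprox ε j N L f₁ g₁) (h₂ : IsApprox ε j N L f₂ g₂) :
    ∃ L' : ℕ,
      IsApprox ε (j + 1) (2 * N) L'
        (fun z => ∑ x ∈ Finset.range (z + 1), f₁ x * f₂ (z - x))
        (fun k₃ => ∑ k₁ ∈ Finset.range (L + 1), ∑ k₂ ∈ Finset.range (L + 1),
          if (1 + ε) ^ k₃ ≤ (1 + ε) ^ k₁ + (1 + ε) ^ k₂ ∧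
              (1 + ε) ^ k₁ + (1 + ε) ^ k₂ < (1 + ε) ^ (k₃ + 1)
            then g₁ k₁ * g₂ k₂ else 0) := by
  classical
  obtain ⟨hf₁N, hg₁L, H₁, hH₁0, hH₁row, hH₁col, hH₁supp⟩ := h₁
  obtain ⟨hf₂N, hg₂L, H₂, hH₂0, hH₂row, hH₂col, hH₂supp⟩ := h₂
  have hb : (1:ℝ) < 1 + ε := by linarith
  have hbpos : (0:ℝ) < 1 + ε := by linarith
  have hH₁N : ∀ x k, N < x → k ≤ L → H₁ x k = 0 := by
    intro x k hx hk
    have h0 : ∑ i ∈ Finset.range (L+1), H₁ x i = 0 := by rw [hH₁row]; exact hf₁N x hx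
    exact (Finset.sum_eq_zero_iff_of_nonneg (fun i _ => hH₁0 x i)).mp h0 k
      (Finset.mem_range.mpr (by omega))
  have hH₂N : ∀ x k, N < x → k ≤ L → H₂ x k = 0 := by
    intro x k hx hk
    have h0 : ∑ i ∈ Finset.range (L+1), H₂ x i = 0 := by rw [hH₂row]; exact hf₂N x hx
    exact (Finset.sum_eq_zero_iff_of_nonneg (fun i _ => hH₂0 x i)).mp h0 k
      (Finset.mem_range.mpr (by omega))
  obtain ⟨L', hL'⟩ : ∃ n : ℕ, 2 * (1+ε)^L < (1+ε)^n := pow_unbounded_of_one_lt _ hb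
  refine ⟨L', ?_, ?_, ?_⟩
  · -- convolution vanishes beyond 2N
    intro z hz
    apply Finset.sum_eq_zero
    intro x hx
    simp only [Finset.mem_range] at hx
    rcases Nat.lt_or_ge N x with h | h
    · rw [hf₁N x h, zero_mul]
    · rw [hf₂N, mul_zero]; omega
  · -- g vanishes beyond L'
    intro k₃ hk₃
    apply Finset.sum_eq_zero
    intro k₁ hk₁
    apply Finset.sum_eq_zero
    intro k₂ hk₂
    simp only [Finset.mem_range] at hk₁ hk₂
    rw [if_neg]
    rintro ⟨hc1, -⟩
    have e1 : (1+ε)^k₁ ≤ (1+ε)^L := pow_le_pow_right₀ hb.le (by omega)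
    have e2 : (1+ε)^k₂ ≤ (1+ε)^L := pow_le_pow_right₀ hb.le (by omega)
    have e3 : (1+ε)^L' ≤ (1+ε)^k₃ := pow_le_pow_right₀ hb.le (by omega)
    linarith
  · refine ⟨fun z k₃ => ∑ x ∈ Finset.range (z+1), ∑ k₁ ∈ Finset.range (L+1),
        ∑ k₂ ∈ Finset.range (L+1),
        if (1 + ε) ^ k₃ ≤ (1 + ε) ^ k₁ + (1 + ε) ^ k₂ ∧
            (1 + ε) ^ k₁ + (1 + ε) ^ k₂ < (1 + ε) ^ (k₃ + 1)
          then H₁ x k₁ * H₂ (z - x) k₂ else 0, ?_, ?_, ?_, ?_⟩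
    · -- nonneg
      intro z k₃
      apply Finset.sum_nonneg; intro x _
      apply Finset.sum_nonneg; intro k₁ _
      apply Finset.sum_nonneg; intro k₂ _
      split_ifs
      · exact mul_nonneg (hH₁0 _ _) (hH₂0 _ _)
      · exact le_refl 0
    · -- row sums
      intro z
      rw [Finset.sum_comm]
      apply Finset.sum_congr rfl
      intro x hx
      rw [Finset.sum_comm]
      have step : ∀ k₁ ∈ Finset.range (L+1),
          (∑ k₃ ∈ Finset.range (L'+1), ∑ k₂ ∈ Finset.range (L+1),
            if (1 + ε) ^ k₃ ≤ (1 + ε) ^ k₁ + (1 + ε) ^ k₂ ∧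
                (1 + ε) ^ k₁ + (1 + ε) ^ k₂ < (1 + ε) ^ (k₃ + 1)
              then H₁ x k₁ * H₂ (z - x) k₂ else 0)
          = ∑ k₂ ∈ Finset.range (L+1), H₁ x k₁ * H₂ (z - x) k₂ := by
        intro k₁ hk₁
        rw [Finset.sum_comm]
        apply Finset.sum_congr rfl
        intro k₂ hk₂
        simp only [Finset.mem_range] at hk₁ hk₂
        -- exactly one bucket k₃ works
        have hs : (1:ℝ) ≤ (1+ε)^k₁ + (1+ε)^k₂ := by
          have := one_le_pow₀ (n := k₁) hb.le
          have := pow_pos hbpos k₂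
          linarith
        obtain ⟨m, hm, hu⟩ := exists_unique_bucket hb hs
        have hmL' : m < L' + 1 := by
          have e1 : (1+ε)^k₁ ≤ (1+ε)^L := pow_le_pow_right₀ hb.le (by omega)
          have e2 : (1+ε)^k₂ ≤ (1+ε)^L := pow_le_pow_right₀ hb.le (by omega)
          have : (1+ε)^m < (1+ε)^L' := by linarith [hm.1]
          have := (pow_lt_pow_iff_right₀ hb).mp this
          omega
        rw [Finset.sum_eq_single m]
        · rw [if_pos hm]
        · intro k hk hne
          rw [if_neg]
          intro hc
          exact hne (hu k hc)
        · intro hm'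
          exact absurd (Finset.mem_range.mpr hmL') hm'
      rw [Finset.sum_congr rfl step, ← hH₁row x, ← hH₂row (z - x), Finset.sum_mul_sum]
    · -- column sums
      intro k₃
      have step1 : ∀ z : ℕ, (∑ x ∈ Finset.range (z+1), ∑ k₁ ∈ Finset.range (L+1),
            ∑ k₂ ∈ Finset.range (L+1),
            if (1 + ε) ^ k₃ ≤ (1 + ε) ^ k₁ + (1 + ε) ^ k₂ ∧
                (1 + ε) ^ k₁ + (1 + ε) ^ k₂ < (1 + ε) ^ (k₃ + 1)
              then H₁ x k₁ * H₂ (z - x) k₂ else 0)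
          = ∑ k₁ ∈ Finset.range (L+1), ∑ k₂ ∈ Finset.range (L+1),
            ∑ x ∈ Finset.range (z+1),
            if (1 + ε) ^ k₃ ≤ (1 + ε) ^ k₁ + (1 + ε) ^ k₂ ∧
                (1 + ε) ^ k₁ + (1 + ε) ^ k₂ < (1 + ε) ^ (k₃ + 1)
              then H₁ x k₁ * H₂ (z - x) k₂ else 0 := by
        intro z
        rw [Finset.sum_comm]
        exact Finset.sum_congr rfl fun k₁ _ => Finset.sum_comm
      rw [Finset.sum_congr rfl fun z _ => step1 z, Finset.sum_comm]
      apply Finset.sum_congr rfl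
      intro k₁ hk₁
      rw [Finset.sum_comm]
      apply Finset.sum_congr rfl
      intro k₂ hk₂
      simp only [Finset.mem_range] at hk₁ hk₂
      split_ifs with hc
      · rw [← hH₁col k₁, ← hH₂col k₂]
        exact conv_sum N (fun x => H₁ x k₁) (fun y => H₂ y k₂)
          (fun x hx => hH₁N x k₁ hx (by omega)) (fun y hy => hH₂N y k₂ hy (by omega))
      · simp
    · -- support
      intro z k₃ hnk
      push_neg at hnk
      apply Finset.sum_eq_zero
      intro x hx
      apply Finset.sum_eq_zero
      intro k₁ hk₁
      apply Finset.sum_eq_zero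
      intro k₂ hk₂
      split_ifs with hc
      · rcases eq_or_ne (H₁ x k₁) 0 with h1 | h1
        · rw [h1, zero_mul]
        rcases eq_or_ne (H₂ (z - x) k₂) 0 with h2 | h2
        · rw [h2, mul_zero]
        exfalso
        have b1 : (1+ε)^k₁ ≤ (x:ℝ) ∧ (x:ℝ) < (1+ε)^(k₁+j) := by
          by_contra hcc; exact h1 (hH₁supp x k₁ hcc)
        have b2 : (1+ε)^k₂ ≤ ((z - x : ℕ):ℝ) ∧ ((z - x : ℕ):ℝ) < (1+ε)^(k₂+j) := by
          by_contra hcc; exact h2 (hH₂supp (z - x) k₂ hcc)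
        have hxz : x ≤ z := by simp only [Finset.mem_range] at hx; omega
        have hcast : ((z - x : ℕ):ℝ) = (z:ℝ) - (x:ℝ) := by
          rw [Nat.cast_sub hxz]
        rw [hcast] at b2
        have hz1 : (1+ε)^k₃ ≤ (z:ℝ) := by linarith [hc.1, b1.1, b2.1]
        have hE : (0:ℝ) < (1+ε)^j := pow_pos hbpos j
        have e1 : (1+ε)^(k₁+j) = (1+ε)^k₁ * (1+ε)^j := pow_add _ _ _
        have e2 : (1+ε)^(k₂+j) = (1+ε)^k₂ * (1+ε)^j := pow_add _ _ _
        have e3 : (1+ε)^(k₃+(j+1)) = (1+ε)^(k₃+1) * (1+ε)^j := by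
          rw [← pow_add]; congr 1; omega
        have p1 := mul_lt_mul_of_pos_right hc.2 hE
        rw [add_mul] at p1
        rw [e1] at b1
        rw [e2] at b2
        have hz2 : (z:ℝ) < (1+ε)^(k₃+(j+1)) := by
          rw [e3]; linarith [b1.2, b2.2, p1]
        linarith [hnk hz1, hz2]
      · rfl
end
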